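/- Let Q be a monotone generalized quantifier of type ⟨k⟩. Then Q is definable in existential second-order logic ESO if and only if ESO(Q) ≡ ESO, i.e., every sentence of ESO(Q) is logically equivalent to a sentence of ESO (the converse containment ESO ≤ ESO(Q) being immediate). -/

import Mathlib

open FirstOrder

universe u

namespace TeamSemantics

/-- A (local) generalized quantifier of type ⟨k⟩: to every universe `M` it assigns
a family of k-ary relations on `M`. -/
def Quant (k : ℕ) : Type (u + 1) :=
  (M : Type u) → Set (Set (Fin k → M))

/-- `Q` is monotone (increasing). -/
def Quant.Mono {k : ℕ} (Q : Quant.{u} k) : Prop :=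
  ∀ (M : Type u) (A B : Set (Fin k → M)), A ∈ Q M → A ⊆ B → B ∈ Q M

/-- `Q` is closed under isomorphisms (it is a class of structures `(M,R)`). -/
def Quant.IsoClosed {k : ℕ} (Q : Quant.{u} k) : Prop :=
  ∀ (M N : Type u) (e : M ≃ N) (A : Set (Fin k → M)),
    A ∈ Q M → ((fun a : Fin k → M => fun i => e (a i)) '' A) ∈ Q N

/-- Non-triviality: `(M,∅) ∉ Q` and `(M,M^k) ∈ Q` for all (nonempty) `M`. -/
def Quant.NonTrivial {k : ℕ} (Q : Quant.{u} k) : Prop :=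
  ∀ (M : Type u), Nonempty M → (∅ ∉ Q M ∧ Set.univ ∈ Q M)

/-- The trivially empty quantifier, used as a dummy parameter for `Q`-free logics. -/
def QEmpty (k : ℕ) : Quant.{u} k := fun _ => ∅

/-- Simultaneous update of an assignment at the tuple of variables `xs` by the tuple `a`. -/
def updVec {M : Type u} {k : ℕ} (s : ℕ → M) (xs : Fin k → ℕ) (a : Fin k → M) : ℕ → M :=
  (List.finRange k).foldl (fun t i => Function.update t (xs i) (a i)) s

/-- The set of variables of a first-order term. -/
def tvarSet {L : FirstOrder.Language.{0, 0}} : L.Term ℕ → Set ℕ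
  | .var x => {x}
  | .func _ ts => ⋃ i, tvarSet (ts i)

/-- Formulas (in negation normal form) of dependence/independence logic over `L`,
extended with a generalized quantifier of type ⟨k⟩.  The logics D, FO, FO(Q), D(Q)
and I(Q) are the fragments singled out below. -/
inductive TForm (L : FirstOrder.Language.{0, 0}) (k : ℕ) : Type
  | rel {n : ℕ} (R : L.Relations n) (ts : Fin n → L.Term ℕ)
  | nrel {n : ℕ} (R : L.Relations n) (ts : Fin n → L.Term ℕ)
  | tEq (t t' : L.Term ℕ)
  | tNe (t t' : L.Term ℕ)
  | dep {n : ℕ} (ts : Fin n → L.Term ℕ) (t : L.Term ℕ)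
  | ndep {n : ℕ} (ts : Fin n → L.Term ℕ) (t : L.Term ℕ)
  | indep {a b c : ℕ} (xb : Fin a → ℕ) (yb : Fin b → ℕ) (zb : Fin c → ℕ)
  | and (φ ψ : TForm L k)
  | or (φ ψ : TForm L k)
  | ex (y : ℕ) (φ : TForm L k)
  | all (y : ℕ) (φ : TForm L k)
  | qu (xs : Fin k → ℕ) (φ : TForm L k)

namespace TForm

variable {L : FirstOrder.Language.{0, 0}} {k : ℕ}

/-- Formulas of dependence logic D (no independence atoms, no generalized quantifier). -/
def IsD : TForm L k → Prop
  | rel _ _ => True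
  | nrel _ _ => True
  | tEq _ _ => True
  | tNe _ _ => True
  | dep _ _ => True
  | ndep _ _ => True
  | indep _ _ _ => False
  | and φ ψ => IsD φ ∧ IsD ψ
  | or φ ψ => IsD φ ∧ IsD ψ
  | ex _ φ => IsD φ
  | all _ φ => IsD φ
  | qu _ _ => False

/-- First-order formulas (no dependence/independence atoms, no generalized quantifier). -/
def IsFO : TForm L k → Prop
  | rel _ _ => True
  | nrel _ _ => True
  | tEq _ _ => True
  | tNe _ _ => True
  | dep _ _ => False
  | ndep _ _ => False
  | indep _ _ _ => False
  | and φ ψ => IsFO φ ∧ IsFO ψ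
  | or φ ψ => IsFO φ ∧ IsFO ψ
  | ex _ φ => IsFO φ
  | all _ φ => IsFO φ
  | qu _ _ => False

/-- Formulas of FO(Q) (no dependence/independence atoms). -/
def IsFOQ : TForm L k → Prop
  | rel _ _ => True
  | nrel _ _ => True
  | tEq _ _ => True
  | tNe _ _ => True
  | dep _ _ => False
  | ndep _ _ => False
  | indep _ _ _ => False
  | and φ ψ => IsFOQ φ ∧ IsFOQ ψ
  | or φ ψ => IsFOQ φ ∧ IsFOQ ψ
  | ex _ φ => IsFOQ φ
  | all _ φ => IsFOQ φ
  | qu _ φ => IsFOQ φ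

/-- Formulas of D(Q) (no independence atoms). -/
def IsDQ : TForm L k → Prop
  | rel _ _ => True
  | nrel _ _ => True
  | tEq _ _ => True
  | tNe _ _ => True
  | dep _ _ => True
  | ndep _ _ => True
  | indep _ _ _ => False
  | and φ ψ => IsDQ φ ∧ IsDQ ψ
  | or φ ψ => IsDQ φ ∧ IsDQ ψ
  | ex _ φ => IsDQ φ
  | all _ φ => IsDQ φ
  | qu _ φ => IsDQ φ

/-- Formulas of I(Q) (independence atoms instead of dependence atoms). -/
def IsIQ : TForm L k → Prop
  | rel _ _ => True
  | nrel _ _ => True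
  | tEq _ _ => True
  | tNe _ _ => True
  | dep _ _ => False
  | ndep _ _ => False
  | indep _ _ _ => True
  | and φ ψ => IsIQ φ ∧ IsIQ ψ
  | or φ ψ => IsIQ φ ∧ IsIQ ψ
  | ex _ φ => IsIQ φ
  | all _ φ => IsIQ φ
  | qu _ φ => IsIQ φ

/-- The set of free variables of a formula; all variables of a dependence or
independence atom count as free. -/
def FV : TForm L k → Set ℕ
  | rel _ ts => ⋃ i, tvarSet (ts i)
  | nrel _ ts => ⋃ i, tvarSet (ts i)
  | tEq t t' => tvarSet t ∪ tvarSet t'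
  | tNe t t' => tvarSet t ∪ tvarSet t'
  | dep ts t => (⋃ i, tvarSet (ts i)) ∪ tvarSet t
  | ndep ts t => (⋃ i, tvarSet (ts i)) ∪ tvarSet t
  | indep xb yb zb => Set.range xb ∪ Set.range yb ∪ Set.range zb
  | and φ ψ => FV φ ∪ FV ψ
  | or φ ψ => FV φ ∪ FV ψ
  | ex y φ => FV φ \ {y}
  | all y φ => FV φ \ {y}
  | qu xs φ => FV φ \ Set.range xs

end TForm

variable {L : FirstOrder.Language.{0, 0}} {k : ℕ}

/-- Team semantics for D(Q)/I(Q).  A team is a set of assignments `ℕ → M`. -/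
def TSat (Q : Quant.{u} k) (M : Type u) [L.Structure M] :
    TForm L k → Set (ℕ → M) → Prop
  | .rel R ts, X => ∀ s ∈ X, FirstOrder.Language.Structure.RelMap R (fun i => (ts i).realize s)
  | .nrel R ts, X => ∀ s ∈ X, ¬ FirstOrder.Language.Structure.RelMap R (fun i => (ts i).realize s)
  | .tEq t t', X => ∀ s ∈ X, t.realize s = t'.realize s
  | .tNe t t', X => ∀ s ∈ X, t.realize s ≠ t'.realize s
  | .dep ts t, X => ∀ s ∈ X, ∀ s' ∈ X,
      (∀ i, (ts i).realize s = (ts i).realize s') → t.realize s = t.realize s'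
  | .ndep _ _, X => X = ∅
  | .indep xb yb zb, X => ∀ s ∈ X, ∀ s' ∈ X, (∀ i, s (xb i) = s' (xb i)) →
      ∃ s₀ ∈ X, (∀ i, s₀ (xb i) = s (xb i)) ∧ (∀ i, s₀ (yb i) = s (yb i)) ∧
        (∀ i, s₀ (zb i) = s' (zb i))
  | .and φ ψ, X => TSat Q M φ X ∧ TSat Q M ψ X
  | .or φ ψ, X => ∃ Y Z, X = Y ∪ Z ∧ TSat Q M φ Y ∧ TSat Q M ψ Z
  | .ex y φ, X => ∃ f : (ℕ → M) → M,
      TSat Q M φ ((fun s => Function.update s y (f s)) '' X)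
  | .all y φ, X => TSat Q M φ {s' | ∃ s ∈ X, ∃ a : M, s' = Function.update s y a}
  | .qu xs φ, X => ∃ F : (ℕ → M) → Set (Fin k → M), (∀ s ∈ X, F s ∈ Q M) ∧
      TSat Q M φ {s' | ∃ s ∈ X, ∃ a ∈ F s, s' = updVec s xs a}

/-- Tarskian (single-assignment) semantics for the FO(Q)-fragment
(dependence and independence atoms are given a dummy interpretation). -/
def PSat (Q : Quant.{u} k) (M : Type u) [L.Structure M] :
    TForm L k → (ℕ → M) → Prop
  | .rel R ts, s => FirstOrder.Language.Structure.RelMap R (fun i => (ts i).realize s)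
  | .nrel R ts, s => ¬ FirstOrder.Language.Structure.RelMap R (fun i => (ts i).realize s)
  | .tEq t t', s => t.realize s = t'.realize s
  | .tNe t t', s => t.realize s ≠ t'.realize s
  | .dep _ _, _ => True
  | .ndep _ _, _ => False
  | .indep _ _ _, _ => True
  | .and φ ψ, s => PSat Q M φ s ∧ PSat Q M ψ s
  | .or φ ψ, s => PSat Q M φ s ∨ PSat Q M ψ s
  | .ex y φ, s => ∃ a : M, PSat Q M φ (Function.update s y a)
  | .all y φ, s => ∀ a : M, PSat Q M φ (Function.update s y a)
  | .qu xs φ, s => {a : Fin k → M | PSat Q M φ (updVec s xs a)} ∈ Q M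

/-- Truth of a sentence in a structure: satisfaction by the team of the empty assignment
(rendered with total assignments: every singleton team satisfies the sentence). -/
def TTrue (Q : Quant.{u} k) (M : Type u) [L.Structure M] (φ : TForm L k) : Prop :=
  ∀ s : ℕ → M, TSat Q M φ {s}

/-- `rel(X)`: the k-ary relation induced by a team `X` on the variables `xs`. -/
def relOf {M : Type u} (xs : Fin k → ℕ) (X : Set (ℕ → M)) : Set (Fin k → M) :=
  (fun s => fun i => s (xs i)) '' X

end TeamSemantics
namespace TeamSemantics

/-- Terms over `L` together with second-order function variables
(`fvar n name ts` is the function variable of arity `n` named `name`,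
applied to the terms `ts`). -/
inductive ETerm (L : FirstOrder.Language.{0, 0}) : Type
  | var (x : ℕ)
  | func {n : ℕ} (f : L.Functions n) (ts : Fin n → ETerm L)
  | fvar (n : ℕ) (name : ℕ) (ts : Fin n → ETerm L)

/-- Formulas of ESO(Q) (in negation normal form) over `L`, where `Q` has type ⟨k⟩:
atomic and negated atomic formulas (including second-order relation variables
`rvar`/`nrvar`), conjunction, disjunction, first-order quantifiers, the quantifier `Q`
(`qu`), and existential second-order relation (`exrel`) and function (`exfun`)
quantifiers. -/
inductive EForm (L : FirstOrder.Language.{0, 0}) (k : ℕ) : Type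
  | rel {n : ℕ} (R : L.Relations n) (ts : Fin n → ETerm L)
  | nrel {n : ℕ} (R : L.Relations n) (ts : Fin n → ETerm L)
  | eEq (t t' : ETerm L)
  | eNe (t t' : ETerm L)
  | rvar (n : ℕ) (name : ℕ) (ts : Fin n → ETerm L)
  | nrvar (n : ℕ) (name : ℕ) (ts : Fin n → ETerm L)
  | and (φ ψ : EForm L k)
  | or (φ ψ : EForm L k)
  | ex (x : ℕ) (φ : EForm L k)
  | all (x : ℕ) (φ : EForm L k)
  | qu (xs : Fin k → ℕ) (φ : EForm L k)
  | exrel (n : ℕ) (name : ℕ) (φ : EForm L k)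
  | exfun (n : ℕ) (name : ℕ) (φ : EForm L k)

/-- An assignment of relations to the second-order relation variables. -/
def RAssign (M : Type u) : Type u :=
  (n : ℕ) → ℕ → Set (Fin n → M)

/-- An assignment of functions to the second-order function variables. -/
def FAssign (M : Type u) : Type u :=
  (n : ℕ) → ℕ → ((Fin n → M) → M)

def RAssign.set {M : Type u} (ρ : RAssign M) (n name : ℕ) (R : Set (Fin n → M)) :
    RAssign M :=
  fun m nm => if h : m = n ∧ nm = name then cast (by rw [h.1]) R else ρ m nm

def FAssign.set {M : Type u} (Fa : FAssign M) (n name : ℕ) (g : (Fin n → M) → M) :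
    FAssign M :=
  fun m nm => if h : m = n ∧ nm = name then cast (by rw [h.1]) g else Fa m nm

variable {L : FirstOrder.Language.{0, 0}} {k : ℕ}

/-- Evaluation of an extended term. -/
def ETerm.eval {M : Type u} [L.Structure M] (Fa : FAssign M) (s : ℕ → M) :
    ETerm L → M
  | .var x => s x
  | .func f ts => FirstOrder.Language.Structure.funMap f (fun i => (ts i).eval Fa s)
  | .fvar n name ts => Fa n name (fun i => (ts i).eval Fa s)

/-- Tarskian satisfaction for ESO(Q). -/
def ESat (Q : Quant.{u} k) (M : Type u) [L.Structure M]
    (ρ : RAssign M) (Fa : FAssign M) (s : ℕ → M) : EForm L k → Prop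
  | .rel R ts => FirstOrder.Language.Structure.RelMap R (fun i => (ts i).eval Fa s)
  | .nrel R ts => ¬ FirstOrder.Language.Structure.RelMap R (fun i => (ts i).eval Fa s)
  | .eEq t t' => t.eval Fa s = t'.eval Fa s
  | .eNe t t' => t.eval Fa s ≠ t'.eval Fa s
  | .rvar n name ts => (fun i => (ts i).eval Fa s) ∈ ρ n name
  | .nrvar n name ts => (fun i => (ts i).eval Fa s) ∉ ρ n name
  | .and φ ψ => ESat Q M ρ Fa s φ ∧ ESat Q M ρ Fa s ψ
  | .or φ ψ => ESat Q M ρ Fa s φ ∨ ESat Q M ρ Fa s ψ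
  | .ex x φ => ∃ a : M, ESat Q M ρ Fa (Function.update s x a) φ
  | .all x φ => ∀ a : M, ESat Q M ρ Fa (Function.update s x a) φ
  | .qu xs φ => {a : Fin k → M | ESat Q M ρ Fa (updVec s xs a) φ} ∈ Q M
  | .exrel n name φ => ∃ R : Set (Fin n → M), ESat Q M (ρ.set n name R) Fa s φ
  | .exfun n name φ => ∃ g : (Fin n → M) → M, ESat Q M ρ (Fa.set n name g) s φ

namespace ETerm

/-- First-order variables occurring in an extended term. -/
def fovars : ETerm L → Set ℕ
  | .var x => {x}
  | .func _ ts => ⋃ i, fovars (ts i)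
  | .fvar _ _ ts => ⋃ i, fovars (ts i)

/-- Function variables (arity, name) occurring in an extended term. -/
def ffvars : ETerm L → Set (ℕ × ℕ)
  | .var _ => ∅
  | .func _ ts => ⋃ i, ffvars (ts i)
  | .fvar n name ts => insert (n, name) (⋃ i, ffvars (ts i))

end ETerm

namespace EForm

/-- Free first-order variables of an ESO(Q) formula. -/
def fv : EForm L k → Set ℕ
  | rel _ ts => ⋃ i, (ts i).fovars
  | nrel _ ts => ⋃ i, (ts i).fovars
  | eEq t t' => t.fovars ∪ t'.fovars
  | eNe t t' => t.fovars ∪ t'.fovars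
  | rvar _ _ ts => ⋃ i, (ts i).fovars
  | nrvar _ _ ts => ⋃ i, (ts i).fovars
  | and φ ψ => fv φ ∪ fv ψ
  | or φ ψ => fv φ ∪ fv ψ
  | ex x φ => fv φ \ {x}
  | all x φ => fv φ \ {x}
  | qu xs φ => fv φ \ Set.range xs
  | exrel _ _ φ => fv φ
  | exfun _ _ φ => fv φ

/-- Free second-order relation variables. -/
def freeRVars : EForm L k → Set (ℕ × ℕ)
  | rel _ _ => ∅
  | nrel _ _ => ∅
  | eEq _ _ => ∅
  | eNe _ _ => ∅
  | rvar n name _ => {(n, name)}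
  | nrvar n name _ => {(n, name)}
  | and φ ψ => freeRVars φ ∪ freeRVars ψ
  | or φ ψ => freeRVars φ ∪ freeRVars ψ
  | ex _ φ => freeRVars φ
  | all _ φ => freeRVars φ
  | qu _ φ => freeRVars φ
  | exrel n name φ => freeRVars φ \ {(n, name)}
  | exfun _ _ φ => freeRVars φ

/-- Free second-order function variables. -/
def freeFVars : EForm L k → Set (ℕ × ℕ)
  | rel _ ts => ⋃ i, (ts i).ffvars
  | nrel _ ts => ⋃ i, (ts i).ffvars
  | eEq t t' => t.ffvars ∪ t'.ffvars
  | eNe t t' => t.ffvars ∪ t'.ffvars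
  | rvar _ _ ts => ⋃ i, (ts i).ffvars
  | nrvar _ _ ts => ⋃ i, (ts i).ffvars
  | and φ ψ => freeFVars φ ∪ freeFVars ψ
  | or φ ψ => freeFVars φ ∪ freeFVars ψ
  | ex _ φ => freeFVars φ
  | all _ φ => freeFVars φ
  | qu _ φ => freeFVars φ
  | exrel _ _ φ => freeFVars φ
  | exfun n name φ => freeFVars φ \ {(n, name)}

/-- A sentence: no free first-order variables and no free second-order variables. -/
def Sentence (φ : EForm L k) : Prop :=
  fv φ = ∅ ∧ freeRVars φ = ∅ ∧ freeFVars φ = ∅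

/-- A sentence over the vocabulary `τ ∪ {R}`, where `R` is rendered as the
second-order relation variable of arity `r` named `0`. -/
def SentenceWithR (r : ℕ) (φ : EForm L k) : Prop :=
  fv φ = ∅ ∧ freeRVars φ ⊆ {(r, 0)} ∧ freeFVars φ = ∅

/-- No occurrence of the generalized quantifier `Q`: the formula is in ESO. -/
def NoQu : EForm L k → Prop
  | rel _ _ => True
  | nrel _ _ => True
  | eEq _ _ => True
  | eNe _ _ => True
  | rvar _ _ _ => True
  | nrvar _ _ _ => True
  | and φ ψ => NoQu φ ∧ NoQu ψ
  | or φ ψ => NoQu φ ∧ NoQu ψ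
  | ex _ φ => NoQu φ
  | all _ φ => NoQu φ
  | qu _ _ => False
  | exrel _ _ φ => NoQu φ
  | exfun _ _ φ => NoQu φ

/-- The relation variable `(r, name)` occurs only negatively (and is never rebound). -/
def OnlyNeg (r name : ℕ) : EForm L k → Prop
  | rel _ _ => True
  | nrel _ _ => True
  | eEq _ _ => True
  | eNe _ _ => True
  | rvar n nm _ => ¬ (n = r ∧ nm = name)
  | nrvar _ _ _ => True
  | and φ ψ => OnlyNeg r name φ ∧ OnlyNeg r name ψ
  | or φ ψ => OnlyNeg r name φ ∧ OnlyNeg r name ψ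
  | ex _ φ => OnlyNeg r name φ
  | all _ φ => OnlyNeg r name φ
  | qu _ φ => OnlyNeg r name φ
  | exrel n nm φ => ¬ (n = r ∧ nm = name) ∧ OnlyNeg r name φ
  | exfun _ _ φ => OnlyNeg r name φ

/-- Quantifier-free formulas. -/
def QFree : EForm L k → Prop
  | rel _ _ => True
  | nrel _ _ => True
  | eEq _ _ => True
  | eNe _ _ => True
  | rvar _ _ _ => True
  | nrvar _ _ _ => True
  | and φ ψ => QFree φ ∧ QFree ψ
  | or φ ψ => QFree φ ∧ QFree ψ
  | ex _ _ => False
  | all _ _ => False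
  | qu _ _ => False
  | exrel _ _ _ => False
  | exfun _ _ _ => False

/-- A prefix of first-order quantifiers from `{Q, ∀}` in front of a
quantifier-free formula. -/
def QuantPrefix : EForm L k → Prop
  | all _ φ => QuantPrefix φ
  | qu _ φ => QuantPrefix φ
  | φ => QFree φ

/-- Normal form: `∃f₁ ⋯ ∃fₙ Q′₁x₁ ⋯ Q′ₘxₘ ψ` with each `Q′ᵢ ∈ {Q, ∀}` and `ψ`
quantifier-free. -/
def NormalForm : EForm L k → Prop
  | exfun _ _ φ => NormalForm φ
  | φ => QuantPrefix φ

/-- No second-order relation variables occur. -/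
def NoRVar : EForm L k → Prop
  | rel _ _ => True
  | nrel _ _ => True
  | eEq _ _ => True
  | eNe _ _ => True
  | rvar _ _ _ => False
  | nrvar _ _ _ => False
  | and φ ψ => NoRVar φ ∧ NoRVar ψ
  | or φ ψ => NoRVar φ ∧ NoRVar ψ
  | ex _ φ => NoRVar φ
  | all _ φ => NoRVar φ
  | qu _ φ => NoRVar φ
  | exrel _ _ _ => False
  | exfun _ _ φ => NoRVar φ

/-- None of the variables in `V` is bound anywhere in the formula. -/
def AvoidsBinding (V : Set ℕ) : EForm L k → Prop
  | rel _ _ => True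
  | nrel _ _ => True
  | eEq _ _ => True
  | eNe _ _ => True
  | rvar _ _ _ => True
  | nrvar _ _ _ => True
  | and φ ψ => AvoidsBinding V φ ∧ AvoidsBinding V ψ
  | or φ ψ => AvoidsBinding V φ ∧ AvoidsBinding V ψ
  | ex x φ => x ∉ V ∧ AvoidsBinding V φ
  | all x φ => x ∉ V ∧ AvoidsBinding V φ
  | qu xs φ => (∀ i, xs i ∉ V) ∧ AvoidsBinding V φ
  | exrel _ _ φ => AvoidsBinding V φ
  | exfun _ _ φ => AvoidsBinding V φ

/-- All function-variable (arity, name) pairs occurring anywhere in the formula,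
whether free, bound, or as a binder. -/
def fNames : EForm L k → Set (ℕ × ℕ)
  | rel _ ts => ⋃ i, (ts i).ffvars
  | nrel _ ts => ⋃ i, (ts i).ffvars
  | eEq t t' => t.ffvars ∪ t'.ffvars
  | eNe t t' => t.ffvars ∪ t'.ffvars
  | rvar _ _ ts => ⋃ i, (ts i).ffvars
  | nrvar _ _ ts => ⋃ i, (ts i).ffvars
  | and φ ψ => fNames φ ∪ fNames ψ
  | or φ ψ => fNames φ ∪ fNames ψ
  | ex _ φ => fNames φ
  | all _ φ => fNames φ
  | qu _ φ => fNames φ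
  | exrel _ _ φ => fNames φ
  | exfun n name φ => insert (n, name) (fNames φ)

end EForm

/-- Truth of an ESO(Q) sentence in a structure. -/
def ETrue (Q : Quant.{u} k) (M : Type u) [L.Structure M] (φ : EForm L k) : Prop :=
  ∀ (ρ : RAssign M) (Fa : FAssign M) (s : ℕ → M), ESat Q M ρ Fa s φ

/-- Truth of an ESO(Q) sentence over `τ ∪ {R}` in the structure `(M, R)`,
where the distinguished relation variable of arity `r` named `0` is interpreted as `R`. -/
def ETrueWithR (Q : Quant.{u} k) (M : Type u) [L.Structure M] {r : ℕ}
    (R : Set (Fin r → M)) (φ : EForm L k) : Prop :=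
  ∀ (ρ : RAssign M) (Fa : FAssign M) (s : ℕ → M), ESat Q M (ρ.set r 0 R) Fa s φ

/-- `Q` is definable in ESO: `Q = Mod(φ)` for an ESO-sentence `φ` over the vocabulary
`{R}` with `R` of arity `k` (the empty language plus the distinguished relation
variable of arity `k` named `0`). -/
def ESODefinable (k : ℕ) (Q : Quant.{u} k) : Prop :=
  ∃ φ : EForm FirstOrder.Language.empty 0, φ.NoQu ∧ φ.SentenceWithR k ∧
    ∀ (M : Type u), Nonempty M → ∀ R : Set (Fin k → M),
      letI := FirstOrder.Language.emptyStructure (M := M)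
      (R ∈ Q M ↔ ETrueWithR (QEmpty 0) M R φ)

end TeamSemantics
namespace TeamSemantics

variable {L : FirstOrder.Language.{0, 0}} {k : ℕ}

/-- Replace every occurrence `f(t₁,…,tₘ)` of the function variable `(m, nf)` by
`g(x̄, t₁,…,tₘ)`, where `g` is the function variable `(k + m, ng)`. -/
def ETerm.skolemSubst (k m nf ng : ℕ) (xs : Fin k → ℕ) : ETerm L → ETerm L
  | .var x => .var x
  | .func f ts => .func f (fun i => (ts i).skolemSubst k m nf ng xs)
  | .fvar n name ts =>
      if h : n = m ∧ name = nf then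
        .fvar (k + m) ng (Fin.append (fun i => ETerm.var (xs i))
          (fun j => ((ts (Fin.cast h.1.symm j)).skolemSubst k m nf ng xs)))
      else .fvar n name (fun i => (ts i).skolemSubst k m nf ng xs)

/-- Replace every occurrence `f(t₁,…,tₘ)` of the function variable `(m, nf)` by
`g(x̄, t₁,…,tₘ)` throughout a formula (stopping where `(m, nf)` is rebound). -/
def EForm.skolemSubst (m nf ng : ℕ) (xs : Fin k → ℕ) : EForm L k → EForm L k
  | .rel R ts => .rel R (fun i => (ts i).skolemSubst k m nf ng xs)
  | .nrel R ts => .nrel R (fun i => (ts i).skolemSubst k m nf ng xs)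
  | .eEq t t' => .eEq (t.skolemSubst k m nf ng xs) (t'.skolemSubst k m nf ng xs)
  | .eNe t t' => .eNe (t.skolemSubst k m nf ng xs) (t'.skolemSubst k m nf ng xs)
  | .rvar n name ts => .rvar n name (fun i => (ts i).skolemSubst k m nf ng xs)
  | .nrvar n name ts => .nrvar n name (fun i => (ts i).skolemSubst k m nf ng xs)
  | .and φ ψ => .and (φ.skolemSubst m nf ng xs) (ψ.skolemSubst m nf ng xs)
  | .or φ ψ => .or (φ.skolemSubst m nf ng xs) (ψ.skolemSubst m nf ng xs)
  | .ex x φ => .ex x (φ.skolemSubst m nf ng xs)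
  | .all x φ => .all x (φ.skolemSubst m nf ng xs)
  | .qu zs φ => .qu zs (φ.skolemSubst m nf ng xs)
  | .exrel n name φ => .exrel n name (φ.skolemSubst m nf ng xs)
  | .exfun n name φ =>
      if n = m ∧ name = nf then .exfun n name φ
      else .exfun n name (φ.skolemSubst m nf ng xs)

/-- Every occurrence of a function variable in the term is of the form `fᵢ(x̄ⁱ)`:
it is `fvar (a i) i` applied to the tuple of distinct variables `arg i`. -/
def ETerm.GoodOcc (n : ℕ) (a : Fin n → ℕ) (arg : (i : Fin n) → Fin (a i) → ℕ) :
    ETerm L → Prop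
  | .var _ => True
  | .func _ ts => ∀ j, (ts j).GoodOcc n a arg
  | .fvar nn name ts => ∃ i : Fin n, ∃ h : nn = a i, name = i.val ∧
      ∀ j : Fin nn, ts j = ETerm.var (arg i (Fin.cast h j))

/-- Every occurrence of a function variable in the formula is of the form `fᵢ(x̄ⁱ)`. -/
def EForm.GoodOcc (n : ℕ) (a : Fin n → ℕ) (arg : (i : Fin n) → Fin (a i) → ℕ) :
    EForm L k → Prop
  | .rel _ ts => ∀ i, (ts i).GoodOcc n a arg
  | .nrel _ ts => ∀ i, (ts i).GoodOcc n a arg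
  | .eEq t t' => t.GoodOcc n a arg ∧ t'.GoodOcc n a arg
  | .eNe t t' => t.GoodOcc n a arg ∧ t'.GoodOcc n a arg
  | .rvar _ _ ts => ∀ i, (ts i).GoodOcc n a arg
  | .nrvar _ _ ts => ∀ i, (ts i).GoodOcc n a arg
  | .and φ ψ => φ.GoodOcc n a arg ∧ ψ.GoodOcc n a arg
  | .or φ ψ => φ.GoodOcc n a arg ∧ ψ.GoodOcc n a arg
  | .ex _ φ => φ.GoodOcc n a arg
  | .all _ φ => φ.GoodOcc n a arg
  | .qu _ φ => φ.GoodOcc n a arg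
  | .exrel _ _ φ => φ.GoodOcc n a arg
  | .exfun _ _ φ => φ.GoodOcc n a arg

/-- Replace each occurrence of the function variable named `i` (for `i < n`) by the
fresh first-order variable `ys i`, turning an extended term into a first-order term. -/
def ETerm.unfunc (n : ℕ) (ys : Fin n → ℕ) : ETerm L → L.Term ℕ
  | .var x => FirstOrder.Language.Term.var x
  | .func f ts => FirstOrder.Language.Term.func f (fun i => (ts i).unfunc n ys)
  | .fvar _ name _ =>
      if h : name < n then FirstOrder.Language.Term.var (ys ⟨name, h⟩)
      else FirstOrder.Language.Term.var 0

/-- The formula `θ` obtained from `ψ` by replacing each term `fᵢ(x̄ⁱ)` by the fresh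
variable `yᵢ` (second-order constructs, which do not occur in the intended use,
are mapped to a dummy formula). -/
def EForm.toTForm (n : ℕ) (ys : Fin n → ℕ) : EForm L k → TForm L k
  | .rel R ts => .rel R (fun i => (ts i).unfunc n ys)
  | .nrel R ts => .nrel R (fun i => (ts i).unfunc n ys)
  | .eEq t t' => .tEq (t.unfunc n ys) (t'.unfunc n ys)
  | .eNe t t' => .tNe (t.unfunc n ys) (t'.unfunc n ys)
  | .rvar _ _ _ => .tEq (FirstOrder.Language.Term.var 0) (FirstOrder.Language.Term.var 0)
  | .nrvar _ _ _ => .tEq (FirstOrder.Language.Term.var 0) (FirstOrder.Language.Term.var 0)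
  | .and φ ψ => .and (φ.toTForm n ys) (ψ.toTForm n ys)
  | .or φ ψ => .or (φ.toTForm n ys) (ψ.toTForm n ys)
  | .ex x φ => .ex x (φ.toTForm n ys)
  | .all x φ => .all x (φ.toTForm n ys)
  | .qu zs φ => .qu zs (φ.toTForm n ys)
  | .exrel _ _ φ => φ.toTForm n ys
  | .exfun _ _ φ => φ.toTForm n ys

end TeamSemantics
set_option linter.unusedVariables false
namespace TeamSemantics

variable {L : FirstOrder.Language.{0, 0}} {k : ℕ}

/-! ### updVec lemmas -/

section UpdVec

variable {M : Type u} (xs : Fin k → ℕ) (a : Fin k → M)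

lemma foldl_update_ne :
    ∀ (l : List (Fin k)) (s : ℕ → M) (v : ℕ), (∀ i ∈ l, xs i ≠ v) →
      l.foldl (fun t i => Function.update t (xs i) (a i)) s v = s v
  | [], _, _, _ => rfl
  | i :: l, s, v, h => by
      rw [List.foldl_cons,
        foldl_update_ne l _ v (fun j hj => h j (List.mem_cons_of_mem _ hj))]
      exact Function.update_of_ne
        (fun hv => h i (List.mem_cons_self) hv.symm) _ _

lemma foldl_update_mem :
    ∀ (l : List (Fin k)) (s : ℕ → M) (i : Fin k), i ∈ l → l.Nodup →
      (∀ j, xs j = xs i → j = i) →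
      l.foldl (fun t i => Function.update t (xs i) (a i)) s (xs i) = a i
  | [], _, _, h, _, _ => absurd h List.not_mem_nil
  | j :: l, s, i, hmem, hnd, hinj => by
      rcases List.mem_cons.1 hmem with h | h
      · subst h
        rw [List.foldl_cons, foldl_update_ne xs a l _ (xs i)
            (fun j' hj' heq => ((List.nodup_cons.1 hnd).1 (hinj j' heq ▸ hj')))]
        simp
      · rw [List.foldl_cons]
        exact foldl_update_mem l _ i h (List.nodup_cons.1 hnd).2 hinj

lemma updVec_apply (hinj : Function.Injective xs) (s : ℕ → M) (i : Fin k) :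
    updVec s xs a (xs i) = a i :=
  foldl_update_mem xs a _ s i (List.mem_finRange i) (List.nodup_finRange k)
    (fun _ h => hinj h)

lemma updVec_not_mem (s : ℕ → M) (v : ℕ) (h : v ∉ Set.range xs) :
    updVec s xs a v = s v :=
  foldl_update_ne xs a _ s v (fun i _ hi => h ⟨i, hi⟩)

lemma foldl_update_congr :
    ∀ (l : List (Fin k)) (s s' : ℕ → M) (v : ℕ),
      (s v = s' v ∨ ∃ i ∈ l, xs i = v) →
      l.foldl (fun t i => Function.update t (xs i) (a i)) s v
        = l.foldl (fun t i => Function.update t (xs i) (a i)) s' v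
  | [], s, s', v, h => by
      rcases h with h | ⟨i, hi, _⟩
      · exact h
      · exact absurd hi List.not_mem_nil
  | i :: l, s, s', v, h => by
      rw [List.foldl_cons, List.foldl_cons]
      apply foldl_update_congr l
      by_cases hv : v = xs i
      · subst hv; left; simp
      · rcases h with h | ⟨j, hj, hje⟩
        · left
          rw [Function.update_of_ne hv, Function.update_of_ne hv]
          exact h
        · rcases List.mem_cons.1 hj with rfl | hj'
          · exact absurd hje.symm hv
          · right; exact ⟨j, hj', hje⟩

lemma updVec_congr (s s' : ℕ → M) (v : ℕ)
    (h : v ∈ Set.range xs ∨ s v = s' v) :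
    updVec s xs a v = updVec s' xs a v := by
  apply foldl_update_congr
  rcases h with ⟨i, hi⟩ | h
  · exact Or.inr ⟨i, List.mem_finRange i, hi⟩
  · exact Or.inl h

end UpdVec

end TeamSemantics
namespace TeamSemantics

variable {L : FirstOrder.Language.{0, 0}} {k : ℕ}

/-! ### Blocks of quantifiers -/

/-- Update a segment `[c, c+m)` of variables. -/
def updSeg {M : Type u} (s : ℕ → M) (c m : ℕ) (b : Fin m → M) : ℕ → M :=
  fun v => if h : c ≤ v ∧ v < c + m then b ⟨v - c, by omega⟩ else s v

lemma updSeg_zero {M : Type u} (s : ℕ → M) (c : ℕ) (b : Fin 0 → M) :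
    updSeg s c 0 b = s := by
  funext v; simp only [updSeg]; rw [dif_neg (by omega)]

lemma updSeg_succ {M : Type u} (s : ℕ → M) (c m : ℕ) (b : Fin (m + 1) → M) :
    updSeg s c (m + 1) b
      = Function.update (updSeg s c m (fun j => b j.castSucc)) (c + m)
          (b (Fin.last m)) := by
  funext v
  rcases eq_or_ne v (c + m) with rfl | hv
  · rw [Function.update_self]
    simp only [updSeg]
    rw [dif_pos (by omega)]
    congr 1
    ext; simp
  · rw [Function.update_of_ne hv]
    simp only [updSeg]
    by_cases h : c ≤ v ∧ v < c + m
    · rw [dif_pos (by omega), dif_pos h]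
      congr 1
    · rw [dif_neg (by omega), dif_neg h]

lemma updSeg_lt {M : Type u} (s : ℕ → M) (c m : ℕ) (b : Fin m → M) (v : ℕ)
    (h : v < c) : updSeg s c m b v = s v := by
  simp only [updSeg]; rw [dif_neg (by omega)]

lemma updSeg_apply {M : Type u} (s : ℕ → M) (c m : ℕ) (b : Fin m → M) (i : Fin m) :
    updSeg s c m b (c + i) = b i := by
  simp only [updSeg]
  rw [dif_pos (by omega)]
  congr 1
  ext; simp

/-- A block of `m` universal quantifiers on the variables `c, …, c+m-1`. -/
def allsB (c : ℕ) : ℕ → EForm L k → EForm L k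
  | 0, φ => φ
  | m + 1, φ => allsB c m (.all (c + m) φ)

lemma allsB_sat (Q : Quant.{u} k) (M : Type u) [L.Structure M]
    (ρ : RAssign M) (Fa : FAssign M) :
    ∀ (m : ℕ) (φ : EForm L k) (s : ℕ → M),
      ESat Q M ρ Fa s (allsB c m φ) ↔
        ∀ b : Fin m → M, ESat Q M ρ Fa (updSeg s c m b) φ
  | 0, φ, s => by
      simp only [allsB]
      constructor
      · intro h b; rwa [updSeg_zero]
      · intro h; have := h (fun j => j.elim0); rwa [updSeg_zero] at this
  | m + 1, φ, s => by
      simp only [allsB]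
      rw [allsB_sat Q M ρ Fa m]
      constructor
      · intro h b
        rw [updSeg_succ]
        exact h (fun j => b j.castSucc) (b (Fin.last m))
      · intro h b
        intro a2
        have := h (Fin.snoc b a2)
        rw [updSeg_succ] at this
        simpa using this

/-- A chain `∃x₁(x₁ = y₁ ∧ ∃x₂(x₂ = y₂ ∧ … φ))`. -/
def exChain : List (ℕ × ℕ) → EForm L k → EForm L k
  | [], φ => φ
  | p :: l, φ => .ex p.1 (.and (.eEq (.var p.1) (.var p.2)) (exChain l φ))

/-- Sequentially copy the value at `p.2` into `p.1`. -/
def updsP {M : Type u} (s : ℕ → M) : List (ℕ × ℕ) → (ℕ → M)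
  | [] => s
  | p :: l => updsP (Function.update s p.1 (s p.2)) l

lemma exChain_sat (Q : Quant.{u} k) (M : Type u) [L.Structure M]
    (ρ : RAssign M) (Fa : FAssign M) (φ : EForm L k) :
    ∀ (l : List (ℕ × ℕ)) (s : ℕ → M), (∀ p ∈ l, ∀ q ∈ l, p.2 ≠ q.1) →
      (ESat Q M ρ Fa s (exChain l φ) ↔ ESat Q M ρ Fa (updsP s l) φ)
  | [], s, _ => Iff.rfl
  | p :: l, s, h => by
      have hpp : p.2 ≠ p.1 :=
        h p (List.mem_cons_self) p (List.mem_cons_self)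
      simp only [exChain, ESat, ETerm.eval, updsP]
      constructor
      · rintro ⟨a2, ha, hsat⟩
        rw [Function.update_self, Function.update_of_ne hpp] at ha
        subst ha
        rwa [← exChain_sat Q M ρ Fa φ l _
          (fun p' hp' q' hq' => h p' (List.mem_cons_of_mem _ hp')
            q' (List.mem_cons_of_mem _ hq'))]
      · intro hsat
        refine ⟨s p.2, ?_, ?_⟩
        · rw [Function.update_self, Function.update_of_ne hpp]
        · rwa [exChain_sat Q M ρ Fa φ l _
            (fun p' hp' q' hq' => h p' (List.mem_cons_of_mem _ hp')
              q' (List.mem_cons_of_mem _ hq'))]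

lemma updsP_eq_foldl {M : Type u} (xs ys : Fin k → ℕ) (b : Fin k → M) :
    ∀ (l : List (Fin k)) (s : ℕ → M),
      (∀ i ∈ l, ∀ j ∈ l, ys i ≠ xs j) → (∀ i ∈ l, s (ys i) = b i) →
      updsP s (l.map fun i => (xs i, ys i))
        = l.foldl (fun t i => Function.update t (xs i) (b i)) s
  | [], _, _, _ => rfl
  | i :: l, s, hd, hb => by
      simp only [List.map_cons, updsP, List.foldl_cons]
      rw [hb i (List.mem_cons_self)]
      exact updsP_eq_foldl xs ys b l _
        (fun i' hi' j' hj' => hd i' (List.mem_cons_of_mem _ hi')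
          j' (List.mem_cons_of_mem _ hj'))
        (fun j hj => by
          rw [Function.update_of_ne (hd j (List.mem_cons_of_mem _ hj)
            i (List.mem_cons_self))]
          exact hb j (List.mem_cons_of_mem _ hj))

lemma updVec_eq_foldl {M : Type u} (s : ℕ → M) (xs : Fin k → ℕ) (b : Fin k → M) :
    updVec s xs b
      = (List.finRange k).foldl (fun t i => Function.update t (xs i) (b i)) s :=
  rfl

end TeamSemantics
namespace TeamSemantics

variable {L : FirstOrder.Language.{0, 0}} {k : ℕ}

/-! ### RAssign/FAssign set lemmas -/

lemma RAssign.set_same {M : Type u} (ρ : RAssign M) (n name : ℕ)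
    (R : Set (Fin n → M)) : (ρ.set n name R) n name = R := by
  show dite _ _ _ = _
  rw [dif_pos (⟨rfl, rfl⟩ : n = n ∧ name = name)]
  exact cast_eq _ R

lemma RAssign.set_ne {M : Type u} (ρ : RAssign M) (n name m nm : ℕ)
    (R : Set (Fin n → M)) (h : ¬(m = n ∧ nm = name)) :
    (ρ.set n name R) m nm = ρ m nm := dif_neg h

lemma FAssign.set_same {M : Type u} (Fa : FAssign M) (n name : ℕ)
    (g : (Fin n → M) → M) : (Fa.set n name g) n name = g := by
  show dite _ _ _ = _
  rw [dif_pos (⟨rfl, rfl⟩ : n = n ∧ name = name)]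
  exact cast_eq _ g

lemma FAssign.set_ne {M : Type u} (Fa : FAssign M) (n name m nm : ℕ)
    (g : (Fin n → M) → M) (h : ¬(m = n ∧ nm = name)) :
    (Fa.set n name g) m nm = Fa m nm := dif_neg h

/-! ### Agreement lemmas -/

lemma ETerm.eval_congr {M : Type u} [L.Structure M] {Fa Fa' : FAssign M}
    {s s' : ℕ → M} :
    ∀ (t : ETerm L), (∀ p ∈ t.ffvars, Fa p.1 p.2 = Fa' p.1 p.2) →
      (∀ v ∈ t.fovars, s v = s' v) → t.eval Fa s = t.eval Fa' s'
  | .var x, _, hs => hs x rfl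
  | .func f ts, hf, hs => by
      simp only [ETerm.eval]
      congr 1
      funext i
      exact ETerm.eval_congr (ts i)
        (fun p hp => hf p (Set.mem_iUnion.2 ⟨i, hp⟩))
        (fun v hv => hs v (Set.mem_iUnion.2 ⟨i, hv⟩))
  | .fvar n name ts, hf, hs => by
      simp only [ETerm.eval]
      rw [hf (n, name) (Set.mem_insert _ _)]
      congr 1
      funext i
      exact ETerm.eval_congr (ts i)
        (fun p hp => hf p (Set.mem_insert_of_mem _ (Set.mem_iUnion.2 ⟨i, hp⟩)))
        (fun v hv => hs v (Set.mem_iUnion.2 ⟨i, hv⟩))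

lemma esat_congr (Q : Quant.{u} k) (M : Type u) [L.Structure M] :
    ∀ (φ : EForm L k) {ρ ρ' : RAssign M} {Fa Fa' : FAssign M} {s s' : ℕ → M},
      (∀ p ∈ φ.freeRVars, ρ p.1 p.2 = ρ' p.1 p.2) →
      (∀ p ∈ φ.freeFVars, Fa p.1 p.2 = Fa' p.1 p.2) →
      (∀ v ∈ φ.fv, s v = s' v) →
      (ESat Q M ρ Fa s φ ↔ ESat Q M ρ' Fa' s' φ)
  | .rel R ts, ρ, ρ', Fa, Fa', s, s', hρ, hf, hs => by
      simp only [ESat]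
      rw [show (fun i => (ts i).eval Fa s) = (fun i => (ts i).eval Fa' s') from
        funext fun i => ETerm.eval_congr (ts i)
          (fun p hp => hf p (Set.mem_iUnion.2 ⟨i, hp⟩))
          (fun v hv => hs v (Set.mem_iUnion.2 ⟨i, hv⟩))]
  | .nrel R ts, ρ, ρ', Fa, Fa', s, s', hρ, hf, hs => by
      simp only [ESat]
      rw [show (fun i => (ts i).eval Fa s) = (fun i => (ts i).eval Fa' s') from
        funext fun i => ETerm.eval_congr (ts i)
          (fun p hp => hf p (Set.mem_iUnion.2 ⟨i, hp⟩))
          (fun v hv => hs v (Set.mem_iUnion.2 ⟨i, hv⟩))]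
  | .eEq t t', ρ, ρ', Fa, Fa', s, s', hρ, hf, hs => by
      simp only [ESat]
      rw [ETerm.eval_congr t (fun p hp => hf p (Set.mem_union_left _ hp))
          (fun v hv => hs v (Set.mem_union_left _ hv)),
        ETerm.eval_congr t' (fun p hp => hf p (Set.mem_union_right _ hp))
          (fun v hv => hs v (Set.mem_union_right _ hv))]
  | .eNe t t', ρ, ρ', Fa, Fa', s, s', hρ, hf, hs => by
      simp only [ESat]
      rw [ETerm.eval_congr t (fun p hp => hf p (Set.mem_union_left _ hp))
          (fun v hv => hs v (Set.mem_union_left _ hv)),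
        ETerm.eval_congr t' (fun p hp => hf p (Set.mem_union_right _ hp))
          (fun v hv => hs v (Set.mem_union_right _ hv))]
  | .rvar n name ts, ρ, ρ', Fa, Fa', s, s', hρ, hf, hs => by
      simp only [ESat]
      rw [show (fun i => (ts i).eval Fa s) = (fun i => (ts i).eval Fa' s') from
        funext fun i => ETerm.eval_congr (ts i)
          (fun p hp => hf p (Set.mem_iUnion.2 ⟨i, hp⟩))
          (fun v hv => hs v (Set.mem_iUnion.2 ⟨i, hv⟩)),
        hρ (n, name) rfl]
  | .nrvar n name ts, ρ, ρ', Fa, Fa', s, s', hρ, hf, hs => by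
      simp only [ESat]
      rw [show (fun i => (ts i).eval Fa s) = (fun i => (ts i).eval Fa' s') from
        funext fun i => ETerm.eval_congr (ts i)
          (fun p hp => hf p (Set.mem_iUnion.2 ⟨i, hp⟩))
          (fun v hv => hs v (Set.mem_iUnion.2 ⟨i, hv⟩)),
        hρ (n, name) rfl]
  | .and φ ψ, ρ, ρ', Fa, Fa', s, s', hρ, hf, hs => by
      simp only [ESat]
      exact and_congr
        (esat_congr Q M φ (fun p hp => hρ p (Set.mem_union_left _ hp))
          (fun p hp => hf p (Set.mem_union_left _ hp))
          (fun v hv => hs v (Set.mem_union_left _ hv)))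
        (esat_congr Q M ψ (fun p hp => hρ p (Set.mem_union_right _ hp))
          (fun p hp => hf p (Set.mem_union_right _ hp))
          (fun v hv => hs v (Set.mem_union_right _ hv)))
  | .or φ ψ, ρ, ρ', Fa, Fa', s, s', hρ, hf, hs => by
      simp only [ESat]
      exact or_congr
        (esat_congr Q M φ (fun p hp => hρ p (Set.mem_union_left _ hp))
          (fun p hp => hf p (Set.mem_union_left _ hp))
          (fun v hv => hs v (Set.mem_union_left _ hv)))
        (esat_congr Q M ψ (fun p hp => hρ p (Set.mem_union_right _ hp))
          (fun p hp => hf p (Set.mem_union_right _ hp))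
          (fun v hv => hs v (Set.mem_union_right _ hv)))
  | .ex x φ, ρ, ρ', Fa, Fa', s, s', hρ, hf, hs => by
      simp only [ESat]
      exact exists_congr fun a => esat_congr Q M φ hρ hf (fun v hv => by
        by_cases h : v = x
        · subst h; simp
        · rw [Function.update_of_ne h, Function.update_of_ne h]
          exact hs v ⟨hv, h⟩)
  | .all x φ, ρ, ρ', Fa, Fa', s, s', hρ, hf, hs => by
      simp only [ESat]
      exact forall_congr' fun a => esat_congr Q M φ hρ hf (fun v hv => by
        by_cases h : v = x
        · subst h; simp
        · rw [Function.update_of_ne h, Function.update_of_ne h]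
          exact hs v ⟨hv, h⟩)
  | .qu xs φ, ρ, ρ', Fa, Fa', s, s', hρ, hf, hs => by
      simp only [ESat]
      rw [show {a : Fin k → M | ESat Q M ρ Fa (updVec s xs a) φ}
          = {a : Fin k → M | ESat Q M ρ' Fa' (updVec s' xs a) φ} from
        Set.ext fun a => esat_congr Q M φ hρ hf (fun v hv =>
          updVec_congr xs a s s' v (by
            by_cases h : v ∈ Set.range xs
            · exact Or.inl h
            · exact Or.inr (hs v ⟨hv, h⟩)))]
  | .exrel n name φ, ρ, ρ', Fa, Fa', s, s', hρ, hf, hs => by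
      simp only [ESat]
      exact exists_congr fun R => esat_congr Q M φ (fun p hp => by
        by_cases h : p.1 = n ∧ p.2 = name
        · obtain ⟨h1, h2⟩ := h; subst h1; subst h2
          rw [RAssign.set_same, RAssign.set_same]
        · rw [RAssign.set_ne _ _ _ _ _ _ h, RAssign.set_ne _ _ _ _ _ _ h]
          exact hρ p ⟨hp, fun he => h (by rw [he]; exact ⟨rfl, rfl⟩)⟩) hf hs
  | .exfun n name φ, ρ, ρ', Fa, Fa', s, s', hρ, hf, hs => by
      simp only [ESat]
      exact exists_congr fun g => esat_congr Q M φ hρ (fun p hp => by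
        by_cases h : p.1 = n ∧ p.2 = name
        · obtain ⟨h1, h2⟩ := h; subst h1; subst h2
          rw [FAssign.set_same, FAssign.set_same]
        · rw [FAssign.set_ne _ _ _ _ _ _ h, FAssign.set_ne _ _ _ _ _ _ h]
          exact hf p ⟨hp, fun he => h (by rw [he]; exact ⟨rfl, rfl⟩)⟩) hs

end TeamSemantics
namespace TeamSemantics

variable {L : FirstOrder.Language.{0, 0}} {k : ℕ}

/-! ### Embedding of empty-language formulas -/

/-- Embed a term over the empty language into any language. -/
def ETerm.embed : ETerm FirstOrder.Language.empty → ETerm L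
  | .var x => .var x
  | .func f _ => Empty.elim f
  | .fvar n name ts => .fvar n name (fun i => (ts i).embed)

/-- Embed an ESO formula over the empty language into `EForm L k`
(only used on `Q`-free formulas; `qu` is mapped to a dummy). -/
def EForm.embed : EForm FirstOrder.Language.empty 0 → EForm L k
  | .rel R _ => Empty.elim R
  | .nrel R _ => Empty.elim R
  | .eEq t t' => .eEq t.embed t'.embed
  | .eNe t t' => .eNe t.embed t'.embed
  | .rvar n name ts => .rvar n name (fun i => (ts i).embed)
  | .nrvar n name ts => .nrvar n name (fun i => (ts i).embed)
  | .and φ ψ => .and φ.embed ψ.embed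
  | .or φ ψ => .or φ.embed ψ.embed
  | .ex x φ => .ex x φ.embed
  | .all x φ => .all x φ.embed
  | .qu _ _ => .eEq (.var 0) (.var 0)
  | .exrel n name φ => .exrel n name φ.embed
  | .exfun n name φ => .exfun n name φ.embed

lemma ETerm.embed_eval {M : Type u} [L.Structure M] (Fa : FAssign M) (s : ℕ → M) :
    ∀ t : ETerm FirstOrder.Language.empty,
      (t.embed : ETerm L).eval Fa s
        = @ETerm.eval FirstOrder.Language.empty M
            FirstOrder.Language.emptyStructure Fa s t
  | .var x => rfl
  | .func f _ => Empty.elim f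
  | .fvar n name ts => by
      simp only [ETerm.embed, ETerm.eval]
      congr 1
      funext i
      exact ETerm.embed_eval Fa s (ts i)

lemma EForm.embed_sat (Q : Quant.{u} k) (M : Type u) [L.Structure M] :
    ∀ (φ : EForm FirstOrder.Language.empty 0), φ.NoQu →
      ∀ (ρ : RAssign M) (Fa : FAssign M) (s : ℕ → M),
      (ESat Q M ρ Fa s (φ.embed : EForm L k) ↔
        @ESat FirstOrder.Language.empty 0 (QEmpty 0) M
          FirstOrder.Language.emptyStructure ρ Fa s φ)
  | .rel R _, _ => Empty.elim R
  | .nrel R _, _ => Empty.elim R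
  | .eEq t t', _ => by
      intro ρ Fa s
      simp only [EForm.embed, ESat, ETerm.embed_eval]
  | .eNe t t', _ => by
      intro ρ Fa s
      simp only [EForm.embed, ESat, ETerm.embed_eval]
  | .rvar n name ts, _ => by
      intro ρ Fa s
      simp only [EForm.embed, ESat, ETerm.embed_eval]
  | .nrvar n name ts, _ => by
      intro ρ Fa s
      simp only [EForm.embed, ESat, ETerm.embed_eval]
  | .and φ ψ, h => by
      intro ρ Fa s
      simp only [EForm.embed, ESat]
      exact and_congr (EForm.embed_sat Q M φ h.1 ρ Fa s)
        (EForm.embed_sat Q M ψ h.2 ρ Fa s)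
  | .or φ ψ, h => by
      intro ρ Fa s
      simp only [EForm.embed, ESat]
      exact or_congr (EForm.embed_sat Q M φ h.1 ρ Fa s)
        (EForm.embed_sat Q M ψ h.2 ρ Fa s)
  | .ex x φ, h => by
      intro ρ Fa s
      simp only [EForm.embed, ESat]
      exact exists_congr fun a => EForm.embed_sat Q M φ h ρ Fa _
  | .all x φ, h => by
      intro ρ Fa s
      simp only [EForm.embed, ESat]
      exact forall_congr' fun a => EForm.embed_sat Q M φ h ρ Fa _
  | .qu _ _, h => h.elim
  | .exrel n name φ, h => by
      intro ρ Fa s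
      simp only [EForm.embed, ESat]
      exact exists_congr fun R => EForm.embed_sat Q M φ h _ Fa s
  | .exfun n name φ, h => by
      intro ρ Fa s
      simp only [EForm.embed, ESat]
      exact exists_congr fun g => EForm.embed_sat Q M φ h ρ _ s

lemma ETerm.embed_fovars : ∀ t : ETerm FirstOrder.Language.empty,
    (ETerm.fovars (t.embed : ETerm L)) = t.fovars
  | .var x => rfl
  | .func f _ => Empty.elim f
  | .fvar n name ts => by
      simp only [ETerm.embed, ETerm.fovars]
      exact Set.iUnion_congr fun i => ETerm.embed_fovars (ts i)

lemma ETerm.embed_ffvars : ∀ t : ETerm FirstOrder.Language.empty,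
    (ETerm.ffvars (t.embed : ETerm L)) = t.ffvars
  | .var x => rfl
  | .func f _ => Empty.elim f
  | .fvar n name ts => by
      simp only [ETerm.embed, ETerm.ffvars]
      rw [Set.iUnion_congr fun i => ETerm.embed_ffvars (ts i)]

lemma EForm.embed_fv : ∀ φ : EForm FirstOrder.Language.empty 0, φ.NoQu →
    EForm.fv (φ.embed : EForm L k) = φ.fv
  | .rel R _, _ => Empty.elim R
  | .nrel R _, _ => Empty.elim R
  | .eEq t t', _ => by
      simp only [EForm.embed, EForm.fv, ETerm.embed_fovars]
  | .eNe t t', _ => by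
      simp only [EForm.embed, EForm.fv, ETerm.embed_fovars]
  | .rvar n name ts, _ => by
      simp only [EForm.embed, EForm.fv, ETerm.embed_fovars]
  | .nrvar n name ts, _ => by
      simp only [EForm.embed, EForm.fv, ETerm.embed_fovars]
  | .and φ ψ, h => by
      simp only [EForm.embed, EForm.fv, EForm.embed_fv φ h.1, EForm.embed_fv ψ h.2]
  | .or φ ψ, h => by
      simp only [EForm.embed, EForm.fv, EForm.embed_fv φ h.1, EForm.embed_fv ψ h.2]
  | .ex x φ, h => by simp only [EForm.embed, EForm.fv, EForm.embed_fv φ h]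
  | .all x φ, h => by simp only [EForm.embed, EForm.fv, EForm.embed_fv φ h]
  | .qu _ _, h => h.elim
  | .exrel n name φ, h => by simp only [EForm.embed, EForm.fv, EForm.embed_fv φ h]
  | .exfun n name φ, h => by simp only [EForm.embed, EForm.fv, EForm.embed_fv φ h]

lemma EForm.embed_freeRVars : ∀ φ : EForm FirstOrder.Language.empty 0, φ.NoQu →
    EForm.freeRVars (φ.embed : EForm L k) = φ.freeRVars
  | .rel R _, _ => Empty.elim R
  | .nrel R _, _ => Empty.elim R
  | .eEq t t', _ => rfl
  | .eNe t t', _ => rfl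
  | .rvar n name ts, _ => rfl
  | .nrvar n name ts, _ => rfl
  | .and φ ψ, h => by
      simp only [EForm.embed, EForm.freeRVars, EForm.embed_freeRVars φ h.1,
        EForm.embed_freeRVars ψ h.2]
  | .or φ ψ, h => by
      simp only [EForm.embed, EForm.freeRVars, EForm.embed_freeRVars φ h.1,
        EForm.embed_freeRVars ψ h.2]
  | .ex x φ, h => by simp only [EForm.embed, EForm.freeRVars, EForm.embed_freeRVars φ h]
  | .all x φ, h => by simp only [EForm.embed, EForm.freeRVars, EForm.embed_freeRVars φ h]
  | .qu _ _, h => h.elim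
  | .exrel n name φ, h => by
      simp only [EForm.embed, EForm.freeRVars, EForm.embed_freeRVars φ h]
  | .exfun n name φ, h => by
      simp only [EForm.embed, EForm.freeRVars, EForm.embed_freeRVars φ h]

lemma EForm.embed_freeFVars : ∀ φ : EForm FirstOrder.Language.empty 0, φ.NoQu →
    EForm.freeFVars (φ.embed : EForm L k) = φ.freeFVars
  | .rel R _, _ => Empty.elim R
  | .nrel R _, _ => Empty.elim R
  | .eEq t t', _ => by
      simp only [EForm.embed, EForm.freeFVars, ETerm.embed_ffvars]
  | .eNe t t', _ => by
      simp only [EForm.embed, EForm.freeFVars, ETerm.embed_ffvars]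
  | .rvar n name ts, _ => by
      simp only [EForm.embed, EForm.freeFVars, ETerm.embed_ffvars]
  | .nrvar n name ts, _ => by
      simp only [EForm.embed, EForm.freeFVars, ETerm.embed_ffvars]
  | .and φ ψ, h => by
      simp only [EForm.embed, EForm.freeFVars, EForm.embed_freeFVars φ h.1,
        EForm.embed_freeFVars ψ h.2]
  | .or φ ψ, h => by
      simp only [EForm.embed, EForm.freeFVars, EForm.embed_freeFVars φ h.1,
        EForm.embed_freeFVars ψ h.2]
  | .ex x φ, h => by simp only [EForm.embed, EForm.freeFVars, EForm.embed_freeFVars φ h]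
  | .all x φ, h => by simp only [EForm.embed, EForm.freeFVars, EForm.embed_freeFVars φ h]
  | .qu _ _, h => h.elim
  | .exrel n name φ, h => by
      simp only [EForm.embed, EForm.freeFVars, EForm.embed_freeFVars φ h]
  | .exfun n name φ, h => by
      simp only [EForm.embed, EForm.freeFVars, EForm.embed_freeFVars φ h]

lemma EForm.embed_noQu : ∀ φ : EForm FirstOrder.Language.empty 0, φ.NoQu →
    EForm.NoQu (φ.embed : EForm L k)
  | .rel R _, _ => Empty.elim R
  | .nrel R _, _ => Empty.elim R
  | .eEq t t', _ => trivial
  | .eNe t t', _ => trivial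
  | .rvar n name ts, _ => trivial
  | .nrvar n name ts, _ => trivial
  | .and φ ψ, h => ⟨EForm.embed_noQu φ h.1, EForm.embed_noQu ψ h.2⟩
  | .or φ ψ, h => ⟨EForm.embed_noQu φ h.1, EForm.embed_noQu ψ h.2⟩
  | .ex x φ, h => EForm.embed_noQu φ h
  | .all x φ, h => EForm.embed_noQu φ h
  | .qu _ _, h => h.elim
  | .exrel n name φ, h => EForm.embed_noQu φ h
  | .exfun n name φ, h => EForm.embed_noQu φ h

end TeamSemantics
namespace TeamSemantics

variable {L : FirstOrder.Language.{0, 0}} {k : ℕ}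

/-! ### Bounds on occurring variables and names -/

/-- All relation-variable names occurring anywhere in a formula. -/
def EForm.rNames : EForm L k → Set (ℕ × ℕ)
  | .rvar n name _ => {(n, name)}
  | .nrvar n name _ => {(n, name)}
  | .and φ ψ => φ.rNames ∪ ψ.rNames
  | .or φ ψ => φ.rNames ∪ ψ.rNames
  | .ex _ φ => φ.rNames
  | .all _ φ => φ.rNames
  | .qu _ φ => φ.rNames
  | .exrel n name φ => insert (n, name) φ.rNames
  | .exfun _ _ φ => φ.rNames
  | _ => ∅

lemma EForm.freeRVars_subset_rNames :
    ∀ φ : EForm L k, φ.freeRVars ⊆ φ.rNames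
  | .rel _ _ => Set.Subset.rfl
  | .nrel _ _ => Set.Subset.rfl
  | .eEq _ _ => Set.Subset.rfl
  | .eNe _ _ => Set.Subset.rfl
  | .rvar n name _ => Set.Subset.rfl
  | .nrvar n name _ => Set.Subset.rfl
  | .and φ ψ => Set.union_subset_union φ.freeRVars_subset_rNames
      ψ.freeRVars_subset_rNames
  | .or φ ψ => Set.union_subset_union φ.freeRVars_subset_rNames
      ψ.freeRVars_subset_rNames
  | .ex _ φ => φ.freeRVars_subset_rNames
  | .all _ φ => φ.freeRVars_subset_rNames
  | .qu _ φ => φ.freeRVars_subset_rNames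
  | .exrel n name φ => (Set.diff_subset).trans
      (φ.freeRVars_subset_rNames.trans (Set.subset_insert _ _))
  | .exfun _ _ φ => φ.freeRVars_subset_rNames

/-- A strict upper bound for relation-variable names occurring in a formula. -/
def EForm.rBound : EForm L k → ℕ
  | .rvar _ name _ => name + 1
  | .nrvar _ name _ => name + 1
  | .and φ ψ => max φ.rBound ψ.rBound
  | .or φ ψ => max φ.rBound ψ.rBound
  | .ex _ φ => φ.rBound
  | .all _ φ => φ.rBound
  | .qu _ φ => φ.rBound
  | .exrel _ name φ => max (name + 1) φ.rBound
  | .exfun _ _ φ => φ.rBound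
  | _ => 0

lemma EForm.rNames_lt_rBound :
    ∀ (φ : EForm L k) (p : ℕ × ℕ), p ∈ φ.rNames → p.2 < φ.rBound
  | .rvar n name _, p, hp => by
      rw [Set.mem_singleton_iff.1 hp]; exact Nat.lt_succ_self _
  | .nrvar n name _, p, hp => by
      rw [Set.mem_singleton_iff.1 hp]; exact Nat.lt_succ_self _
  | .and φ ψ, p, hp => by
      rcases hp with hp | hp
      · exact lt_of_lt_of_le (φ.rNames_lt_rBound p hp) (le_max_left _ _)
      · exact lt_of_lt_of_le (ψ.rNames_lt_rBound p hp) (le_max_right _ _)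
  | .or φ ψ, p, hp => by
      rcases hp with hp | hp
      · exact lt_of_lt_of_le (φ.rNames_lt_rBound p hp) (le_max_left _ _)
      · exact lt_of_lt_of_le (ψ.rNames_lt_rBound p hp) (le_max_right _ _)
  | .ex _ φ, p, hp => φ.rNames_lt_rBound p hp
  | .all _ φ, p, hp => φ.rNames_lt_rBound p hp
  | .qu _ φ, p, hp => φ.rNames_lt_rBound p hp
  | .exrel n name φ, p, hp => by
      rcases hp with hp | hp
      · simp only [EForm.rBound]
        have : p.2 = name := by rw [hp]
        omega
      · exact lt_of_lt_of_le (φ.rNames_lt_rBound p hp) (le_max_right _ _)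
  | .exfun _ _ φ, p, hp => φ.rNames_lt_rBound p hp

/-- A strict upper bound for first-order variables occurring in a term. -/
def ETerm.tBound : ETerm L → ℕ
  | .var x => x + 1
  | .func _ ts => Finset.univ.sup fun i => (ts i).tBound
  | .fvar _ _ ts => Finset.univ.sup fun i => (ts i).tBound

lemma ETerm.fovars_lt_tBound :
    ∀ (t : ETerm L) (v : ℕ), v ∈ t.fovars → v < t.tBound
  | .var x, v, hv => by
      rw [Set.mem_singleton_iff.1 hv]; exact Nat.lt_succ_self _
  | .func f ts, v, hv => by
      obtain ⟨i, hi⟩ := Set.mem_iUnion.1 hv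
      simp only [ETerm.tBound]
      exact lt_of_lt_of_le ((ts i).fovars_lt_tBound v hi)
        (Finset.le_sup (f := fun j => (ts j).tBound) (Finset.mem_univ i))
  | .fvar n name ts, v, hv => by
      obtain ⟨i, hi⟩ := Set.mem_iUnion.1 hv
      simp only [ETerm.tBound]
      exact lt_of_lt_of_le ((ts i).fovars_lt_tBound v hi)
        (Finset.le_sup (f := fun j => (ts j).tBound) (Finset.mem_univ i))

/-- A strict upper bound for all first-order variables occurring (free or bound)
in a formula. -/
def EForm.vBound : EForm L k → ℕ
  | .rel _ ts => Finset.univ.sup fun i => (ts i).tBound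
  | .nrel _ ts => Finset.univ.sup fun i => (ts i).tBound
  | .eEq t t' => max t.tBound t'.tBound
  | .eNe t t' => max t.tBound t'.tBound
  | .rvar _ _ ts => Finset.univ.sup fun i => (ts i).tBound
  | .nrvar _ _ ts => Finset.univ.sup fun i => (ts i).tBound
  | .and φ ψ => max φ.vBound ψ.vBound
  | .or φ ψ => max φ.vBound ψ.vBound
  | .ex x φ => max (x + 1) φ.vBound
  | .all x φ => max (x + 1) φ.vBound
  | .qu xs φ => max (Finset.univ.sup fun i => xs i + 1) φ.vBound
  | .exrel _ _ φ => φ.vBound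
  | .exfun _ _ φ => φ.vBound

lemma EForm.fv_lt_vBound :
    ∀ (φ : EForm L k) (v : ℕ), v ∈ φ.fv → v < φ.vBound
  | .rel _ ts, v, hv => by
      obtain ⟨i, hi⟩ := Set.mem_iUnion.1 hv
      simp only [EForm.vBound]
      exact lt_of_lt_of_le ((ts i).fovars_lt_tBound v hi)
        (Finset.le_sup (f := fun j => (ts j).tBound) (Finset.mem_univ i))
  | .nrel _ ts, v, hv => by
      obtain ⟨i, hi⟩ := Set.mem_iUnion.1 hv
      simp only [EForm.vBound]
      exact lt_of_lt_of_le ((ts i).fovars_lt_tBound v hi)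
        (Finset.le_sup (f := fun j => (ts j).tBound) (Finset.mem_univ i))
  | .eEq t t', v, hv => by
      rcases hv with hv | hv
      · exact lt_of_lt_of_le (t.fovars_lt_tBound v hv) (le_max_left _ _)
      · exact lt_of_lt_of_le (t'.fovars_lt_tBound v hv) (le_max_right _ _)
  | .eNe t t', v, hv => by
      rcases hv with hv | hv
      · exact lt_of_lt_of_le (t.fovars_lt_tBound v hv) (le_max_left _ _)
      · exact lt_of_lt_of_le (t'.fovars_lt_tBound v hv) (le_max_right _ _)
  | .rvar _ _ ts, v, hv => by
      obtain ⟨i, hi⟩ := Set.mem_iUnion.1 hv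
      simp only [EForm.vBound]
      exact lt_of_lt_of_le ((ts i).fovars_lt_tBound v hi)
        (Finset.le_sup (f := fun j => (ts j).tBound) (Finset.mem_univ i))
  | .nrvar _ _ ts, v, hv => by
      obtain ⟨i, hi⟩ := Set.mem_iUnion.1 hv
      simp only [EForm.vBound]
      exact lt_of_lt_of_le ((ts i).fovars_lt_tBound v hi)
        (Finset.le_sup (f := fun j => (ts j).tBound) (Finset.mem_univ i))
  | .and φ ψ, v, hv => by
      rcases hv with hv | hv
      · exact lt_of_lt_of_le (φ.fv_lt_vBound v hv) (le_max_left _ _)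
      · exact lt_of_lt_of_le (ψ.fv_lt_vBound v hv) (le_max_right _ _)
  | .or φ ψ, v, hv => by
      rcases hv with hv | hv
      · exact lt_of_lt_of_le (φ.fv_lt_vBound v hv) (le_max_left _ _)
      · exact lt_of_lt_of_le (ψ.fv_lt_vBound v hv) (le_max_right _ _)
  | .ex x φ, v, hv => lt_of_lt_of_le (φ.fv_lt_vBound v hv.1) (le_max_right _ _)
  | .all x φ, v, hv => lt_of_lt_of_le (φ.fv_lt_vBound v hv.1) (le_max_right _ _)
  | .qu xs φ, v, hv => lt_of_lt_of_le (φ.fv_lt_vBound v hv.1) (le_max_right _ _)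
  | .exrel _ _ φ, v, hv => φ.fv_lt_vBound v hv
  | .exfun _ _ φ, v, hv => φ.fv_lt_vBound v hv

lemma EForm.qu_var_lt_vBound (xs : Fin k → ℕ) (φ : EForm L k) (i : Fin k) :
    xs i < (EForm.qu xs φ).vBound :=
  lt_of_lt_of_le (Nat.lt_succ_self _)
    (le_trans (Finset.le_sup (f := fun j => xs j + 1) (Finset.mem_univ i))
      (le_max_left _ _))

/-! ### Renaming the distinguished relation variable -/

/-- Rename every occurrence of the relation variable `(k', 0)` to `(k', N)`. -/
def EForm.renameR (k' N : ℕ) : EForm L k → EForm L k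
  | .rvar n name ts =>
      if n = k' ∧ name = 0 then .rvar n N ts else .rvar n name ts
  | .nrvar n name ts =>
      if n = k' ∧ name = 0 then .nrvar n N ts else .nrvar n name ts
  | .exrel n name φ =>
      if n = k' ∧ name = 0 then .exrel n N (φ.renameR k' N)
      else .exrel n name (φ.renameR k' N)
  | .and φ ψ => .and (φ.renameR k' N) (ψ.renameR k' N)
  | .or φ ψ => .or (φ.renameR k' N) (ψ.renameR k' N)
  | .ex x φ => .ex x (φ.renameR k' N)
  | .all x φ => .all x (φ.renameR k' N)
  | .qu xs φ => .qu xs (φ.renameR k' N)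
  | .exfun n name φ => .exfun n name (φ.renameR k' N)
  | φ => φ

end TeamSemantics
namespace TeamSemantics

variable {L : FirstOrder.Language.{0, 0}} {k : ℕ}

lemma EForm.renameR_noQu (k' N : ℕ) :
    ∀ φ : EForm L k, φ.NoQu → (φ.renameR k' N).NoQu
  | .rel _ _, h => h
  | .nrel _ _, h => h
  | .eEq _ _, h => h
  | .eNe _ _, h => h
  | .rvar n name ts, h => by
      by_cases hc : n = k' ∧ name = 0 <;> simp [EForm.renameR, hc, EForm.NoQu]
  | .nrvar n name ts, h => by
      by_cases hc : n = k' ∧ name = 0 <;> simp [EForm.renameR, hc, EForm.NoQu]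
  | .and φ ψ, h => ⟨φ.renameR_noQu k' N h.1, ψ.renameR_noQu k' N h.2⟩
  | .or φ ψ, h => ⟨φ.renameR_noQu k' N h.1, ψ.renameR_noQu k' N h.2⟩
  | .ex x φ, h => φ.renameR_noQu k' N h
  | .all x φ, h => φ.renameR_noQu k' N h
  | .qu _ _, h => h.elim
  | .exrel n name φ, h => by
      by_cases hc : n = k' ∧ name = 0 <;>
        simp only [EForm.renameR, if_pos, if_neg, hc, if_true, if_false] <;>
        exact φ.renameR_noQu k' N h
  | .exfun n name φ, h => φ.renameR_noQu k' N h

lemma EForm.renameR_fv (k' N : ℕ) :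
    ∀ φ : EForm L k, (φ.renameR k' N).fv = φ.fv
  | .rel _ _ => rfl
  | .nrel _ _ => rfl
  | .eEq _ _ => rfl
  | .eNe _ _ => rfl
  | .rvar n name ts => by
      by_cases hc : n = k' ∧ name = 0 <;> simp [EForm.renameR, hc, EForm.fv]
  | .nrvar n name ts => by
      by_cases hc : n = k' ∧ name = 0 <;> simp [EForm.renameR, hc, EForm.fv]
  | .and φ ψ => by
      simp only [EForm.renameR, EForm.fv, φ.renameR_fv k' N, ψ.renameR_fv k' N]
  | .or φ ψ => by
      simp only [EForm.renameR, EForm.fv, φ.renameR_fv k' N, ψ.renameR_fv k' N]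
  | .ex x φ => by simp only [EForm.renameR, EForm.fv, φ.renameR_fv k' N]
  | .all x φ => by simp only [EForm.renameR, EForm.fv, φ.renameR_fv k' N]
  | .qu xs φ => by simp only [EForm.renameR, EForm.fv, φ.renameR_fv k' N]
  | .exrel n name φ => by
      by_cases hc : n = k' ∧ name = 0 <;>
        simp [EForm.renameR, hc, EForm.fv, φ.renameR_fv k' N]
  | .exfun n name φ => by simp only [EForm.renameR, EForm.fv, φ.renameR_fv k' N]

lemma EForm.renameR_freeFVars (k' N : ℕ) :
    ∀ φ : EForm L k, (φ.renameR k' N).freeFVars = φ.freeFVars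
  | .rel _ _ => rfl
  | .nrel _ _ => rfl
  | .eEq _ _ => rfl
  | .eNe _ _ => rfl
  | .rvar n name ts => by
      by_cases hc : n = k' ∧ name = 0 <;> simp [EForm.renameR, hc, EForm.freeFVars]
  | .nrvar n name ts => by
      by_cases hc : n = k' ∧ name = 0 <;> simp [EForm.renameR, hc, EForm.freeFVars]
  | .and φ ψ => by
      simp only [EForm.renameR, EForm.freeFVars, φ.renameR_freeFVars k' N,
        ψ.renameR_freeFVars k' N]
  | .or φ ψ => by
      simp only [EForm.renameR, EForm.freeFVars, φ.renameR_freeFVars k' N,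
        ψ.renameR_freeFVars k' N]
  | .ex x φ => by simp only [EForm.renameR, EForm.freeFVars, φ.renameR_freeFVars k' N]
  | .all x φ => by simp only [EForm.renameR, EForm.freeFVars, φ.renameR_freeFVars k' N]
  | .qu xs φ => by simp only [EForm.renameR, EForm.freeFVars, φ.renameR_freeFVars k' N]
  | .exrel n name φ => by
      by_cases hc : n = k' ∧ name = 0 <;>
        simp [EForm.renameR, hc, EForm.freeFVars, φ.renameR_freeFVars k' N]
  | .exfun n name φ => by
      simp only [EForm.renameR, EForm.freeFVars, φ.renameR_freeFVars k' N]

lemma EForm.renameR_freeRVars_subset (k' N : ℕ) :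
    ∀ φ : EForm L k,
      (φ.renameR k' N).freeRVars ⊆ (φ.freeRVars \ {(k', 0)}) ∪ {(k', N)}
  | .rel _ _ => by simp [EForm.renameR, EForm.freeRVars]
  | .nrel _ _ => by simp [EForm.renameR, EForm.freeRVars]
  | .eEq _ _ => by simp [EForm.renameR, EForm.freeRVars]
  | .eNe _ _ => by simp [EForm.renameR, EForm.freeRVars]
  | .rvar n name ts => by
      by_cases hc : n = k' ∧ name = 0
      · obtain ⟨rfl, rfl⟩ := hc
        simp [EForm.renameR, EForm.freeRVars]
      · intro p hp
        simp only [EForm.renameR, if_neg hc, EForm.freeRVars,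
          Set.mem_singleton_iff] at hp
        subst hp
        exact Or.inl ⟨rfl, fun he => hc
          ⟨congrArg Prod.fst (Set.mem_singleton_iff.1 he),
            congrArg Prod.snd (Set.mem_singleton_iff.1 he)⟩⟩
  | .nrvar n name ts => by
      by_cases hc : n = k' ∧ name = 0
      · obtain ⟨rfl, rfl⟩ := hc
        simp [EForm.renameR, EForm.freeRVars]
      · intro p hp
        simp only [EForm.renameR, if_neg hc, EForm.freeRVars,
          Set.mem_singleton_iff] at hp
        subst hp
        exact Or.inl ⟨rfl, fun he => hc
          ⟨congrArg Prod.fst (Set.mem_singleton_iff.1 he),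
            congrArg Prod.snd (Set.mem_singleton_iff.1 he)⟩⟩
  | .and φ ψ => by
      intro p hp
      rcases hp with hp | hp
      · rcases φ.renameR_freeRVars_subset k' N hp with h | h
        · exact Or.inl ⟨Set.mem_union_left _ h.1, h.2⟩
        · exact Or.inr h
      · rcases ψ.renameR_freeRVars_subset k' N hp with h | h
        · exact Or.inl ⟨Set.mem_union_right _ h.1, h.2⟩
        · exact Or.inr h
  | .or φ ψ => by
      intro p hp
      rcases hp with hp | hp
      · rcases φ.renameR_freeRVars_subset k' N hp with h | h
        · exact Or.inl ⟨Set.mem_union_left _ h.1, h.2⟩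
        · exact Or.inr h
      · rcases ψ.renameR_freeRVars_subset k' N hp with h | h
        · exact Or.inl ⟨Set.mem_union_right _ h.1, h.2⟩
        · exact Or.inr h
  | .ex x φ => φ.renameR_freeRVars_subset k' N
  | .all x φ => φ.renameR_freeRVars_subset k' N
  | .qu xs φ => φ.renameR_freeRVars_subset k' N
  | .exrel n name φ => by
      by_cases hc : n = k' ∧ name = 0
      · simp only [EForm.renameR, if_pos hc, EForm.freeRVars]
        obtain ⟨rfl, rfl⟩ := hc
        intro p hp
        rcases φ.renameR_freeRVars_subset _ N hp.1 with h | h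
        · exact Or.inl ⟨⟨h.1, h.2⟩, h.2⟩
        · exact Or.inr h
      · simp only [EForm.renameR, if_neg hc, EForm.freeRVars]
        intro p hp
        rcases φ.renameR_freeRVars_subset k' N hp.1 with h | h
        · exact Or.inl ⟨⟨h.1, hp.2⟩, h.2⟩
        · exact Or.inr h
  | .exfun n name φ => φ.renameR_freeRVars_subset k' N

lemma EForm.renameR_sat (Q : Quant.{u} k) (M : Type u) [L.Structure M] (k' N : ℕ) :
    ∀ (φ : EForm L k), (∀ p ∈ φ.rNames, p.2 < N) →
      ∀ (ρ : RAssign M) (Fa : FAssign M) (s : ℕ → M),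
      (ESat Q M ρ Fa s (φ.renameR k' N) ↔
        ESat Q M (ρ.set k' 0 (ρ k' N)) Fa s φ)
  | .rel R ts, hN, ρ, Fa, s => Iff.rfl
  | .nrel R ts, hN, ρ, Fa, s => Iff.rfl
  | .eEq t t', hN, ρ, Fa, s => Iff.rfl
  | .eNe t t', hN, ρ, Fa, s => Iff.rfl
  | .rvar n name ts, hN, ρ, Fa, s => by
      by_cases hc : n = k' ∧ name = 0
      · simp only [EForm.renameR, if_pos hc, ESat]
        obtain ⟨rfl, rfl⟩ := hc
        rw [RAssign.set_same]
      · simp only [EForm.renameR, if_neg hc, ESat,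
          RAssign.set_ne _ _ _ _ _ _ hc]
  | .nrvar n name ts, hN, ρ, Fa, s => by
      by_cases hc : n = k' ∧ name = 0
      · simp only [EForm.renameR, if_pos hc, ESat]
        obtain ⟨rfl, rfl⟩ := hc
        rw [RAssign.set_same]
      · simp only [EForm.renameR, if_neg hc, ESat,
          RAssign.set_ne _ _ _ _ _ _ hc]
  | .and φ ψ, hN, ρ, Fa, s => by
      simp only [EForm.renameR, ESat]
      exact and_congr
        (φ.renameR_sat Q M k' N (fun p hp => hN p (Set.mem_union_left _ hp)) ρ Fa s)
        (ψ.renameR_sat Q M k' N (fun p hp => hN p (Set.mem_union_right _ hp)) ρ Fa s)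
  | .or φ ψ, hN, ρ, Fa, s => by
      simp only [EForm.renameR, ESat]
      exact or_congr
        (φ.renameR_sat Q M k' N (fun p hp => hN p (Set.mem_union_left _ hp)) ρ Fa s)
        (ψ.renameR_sat Q M k' N (fun p hp => hN p (Set.mem_union_right _ hp)) ρ Fa s)
  | .ex x φ, hN, ρ, Fa, s => by
      simp only [EForm.renameR, ESat]
      exact exists_congr fun a => φ.renameR_sat Q M k' N hN ρ Fa _
  | .all x φ, hN, ρ, Fa, s => by
      simp only [EForm.renameR, ESat]
      exact forall_congr' fun a => φ.renameR_sat Q M k' N hN ρ Fa _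
  | .qu xs φ, hN, ρ, Fa, s => by
      simp only [EForm.renameR, ESat]
      rw [Set.ext fun a => φ.renameR_sat Q M k' N hN ρ Fa (updVec s xs a)]
  | .exfun n name φ, hN, ρ, Fa, s => by
      simp only [EForm.renameR, ESat]
      exact exists_congr fun g => φ.renameR_sat Q M k' N hN ρ _ s
  | .exrel n name φ, hN, ρ, Fa, s => by
      have hNφ : ∀ p ∈ φ.rNames, p.2 < N :=
        fun p hp => hN p (Set.mem_insert_of_mem _ hp)
      have hfree : ∀ p ∈ φ.freeRVars, p.2 < N :=
        fun p hp => hNφ p (φ.freeRVars_subset_rNames hp)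
      by_cases hc : n = k' ∧ name = 0
      · simp only [EForm.renameR, if_pos hc, ESat]
        obtain ⟨rfl, rfl⟩ := hc
        refine exists_congr fun R => ?_
        rw [φ.renameR_sat Q M n N hNφ (ρ.set n N R) Fa s, RAssign.set_same]
        refine esat_congr Q M φ (fun p hp => ?_) (fun _ _ => rfl) (fun _ _ => rfl)
        by_cases hp0 : p.1 = n ∧ p.2 = 0
        · rw [hp0.1, hp0.2, RAssign.set_same, RAssign.set_same]
        · rw [RAssign.set_ne _ _ _ _ _ _ hp0, RAssign.set_ne _ _ _ _ _ _ hp0,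
            RAssign.set_ne _ _ _ _ _ _ hp0,
            RAssign.set_ne _ _ _ _ _ _
              (fun hc' => absurd hc'.2 (Nat.ne_of_lt (hfree p hp)))]
      · have hname : name < N := hN (n, name) (Set.mem_insert _ _)
        simp only [EForm.renameR, if_neg hc, ESat]
        refine exists_congr fun R => ?_
        rw [φ.renameR_sat Q M k' N hNφ (ρ.set n name R) Fa s,
          RAssign.set_ne _ _ _ _ _ _
            (fun hc' => absurd hc'.2.symm (Nat.ne_of_lt hname))]
        refine esat_congr Q M φ (fun p hp => ?_) (fun _ _ => rfl) (fun _ _ => rfl)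
        by_cases hp1 : p.1 = n ∧ p.2 = name
        · rw [hp1.1, hp1.2, RAssign.set_ne _ _ _ _ _ _ hc,
            RAssign.set_same, RAssign.set_same]
        · by_cases hp2 : p.1 = k' ∧ p.2 = 0
          · rw [hp2.1, hp2.2, RAssign.set_same,
              RAssign.set_ne _ _ _ _ _ _ (fun hc' => hc ⟨hc'.1.symm, hc'.2.symm⟩),
              RAssign.set_same]
          · rw [RAssign.set_ne _ _ _ _ _ _ hp2, RAssign.set_ne _ _ _ _ _ _ hp1,
              RAssign.set_ne _ _ _ _ _ _ hp1, RAssign.set_ne _ _ _ _ _ _ hp2]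

end TeamSemantics
namespace TeamSemantics

variable {L : FirstOrder.Language.{0, 0}} {k : ℕ}

private lemma pair_eq (p : ℕ × ℕ) (a b : ℕ) (h1 : p.1 = a) (h2 : p.2 = b) :
    p = (a, b) := by
  obtain ⟨x, y⟩ := p
  cases h1; cases h2; rfl

/-! ### Syntactic lemmas for quantifier blocks -/

lemma allsB_noQu (c : ℕ) :
    ∀ (m : ℕ) (φ : EForm L k), φ.NoQu → (allsB c m φ).NoQu
  | 0, φ, h => h
  | m + 1, φ, h => allsB_noQu c m _ h

lemma exChain_noQu :
    ∀ (l : List (ℕ × ℕ)) (φ : EForm L k), φ.NoQu → (exChain l φ).NoQu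
  | [], φ, h => h
  | p :: l, φ, h => ⟨trivial, exChain_noQu l φ h⟩

lemma allsB_freeRVars (c : ℕ) :
    ∀ (m : ℕ) (φ : EForm L k), (allsB c m φ).freeRVars = φ.freeRVars
  | 0, φ => rfl
  | m + 1, φ => allsB_freeRVars c m _

lemma exChain_freeRVars :
    ∀ (l : List (ℕ × ℕ)) (φ : EForm L k), (exChain l φ).freeRVars = φ.freeRVars
  | [], φ => rfl
  | p :: l, φ => by
      simp only [exChain, EForm.freeRVars, exChain_freeRVars l φ,
        Set.empty_union]

lemma allsB_freeFVars (c : ℕ) :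
    ∀ (m : ℕ) (φ : EForm L k), (allsB c m φ).freeFVars = φ.freeFVars
  | 0, φ => rfl
  | m + 1, φ => allsB_freeFVars c m _

lemma exChain_freeFVars :
    ∀ (l : List (ℕ × ℕ)) (φ : EForm L k), (exChain l φ).freeFVars = φ.freeFVars
  | [], φ => rfl
  | p :: l, φ => by
      simp only [exChain, EForm.freeFVars, exChain_freeFVars l φ,
        ETerm.ffvars, Set.empty_union, Set.union_empty]

lemma allsB_fv (c : ℕ) :
    ∀ (m : ℕ) (φ : EForm L k),
      (allsB c m φ).fv ⊆ φ.fv \ {v | c ≤ v ∧ v < c + m}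
  | 0, φ => fun v hv => ⟨hv, by simp only [Set.mem_setOf_eq]; omega⟩
  | m + 1, φ => by
      intro v hv
      have := allsB_fv c m (.all (c + m) φ) hv
      obtain ⟨⟨h1, h2⟩, h3⟩ := this
      have h2' : v ≠ c + m := h2
      exact ⟨h1, by simp only [Set.mem_setOf_eq] at h3 ⊢; omega⟩

lemma exChain_fv :
    ∀ (l : List (ℕ × ℕ)) (φ : EForm L k),
      (exChain l φ).fv ⊆ (φ.fv \ {v | ∃ p ∈ l, p.1 = v}) ∪ {v | ∃ p ∈ l, p.2 = v}
  | [], φ => fun v hv => Or.inl ⟨hv, by simp⟩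
  | p :: l, φ => by
      intro v hv
      obtain ⟨hin, hne⟩ := hv
      have hne' : v ≠ p.1 := hne
      rcases hin with (h1 | h2) | hrest
      · exact absurd (Set.mem_singleton_iff.1 h1) hne'
      · exact Or.inr ⟨p, List.mem_cons_self, (Set.mem_singleton_iff.1 h2).symm⟩
      · rcases exChain_fv l φ hrest with ⟨hfv, hno⟩ | hsnd
        · refine Or.inl ⟨hfv, ?_⟩
          rintro ⟨q, hq, rfl⟩
          rcases List.mem_cons.1 hq with rfl | hq'
          · exact hne' rfl
          · exact hno ⟨q, hq', rfl⟩
        · obtain ⟨q, hq, hqe⟩ := hsnd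
          exact Or.inr ⟨q, List.mem_cons_of_mem _ hq, hqe⟩

/-! ### The translation eliminating `Q` -/

/-- Replace each `Q x̄ φ` by
`∃R (δ ∧ ∀ȳ (¬R(ȳ) ∨ ∃x̄(x̄ = ȳ ∧ φ)))`, where `δ` defines `R ∈ Q`. -/
def EForm.trQ (c N : ℕ) (δ : EForm L k) : EForm L k → EForm L k
  | .qu xs φ => .exrel k N (.and δ (allsB c k (.or
      (.nrvar k N fun i => .var (c + i.val))
      (exChain ((List.finRange k).map fun i => (xs i, c + i.val))
        (EForm.trQ c N δ φ)))))
  | .and φ ψ => .and (EForm.trQ c N δ φ) (EForm.trQ c N δ ψ)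
  | .or φ ψ => .or (EForm.trQ c N δ φ) (EForm.trQ c N δ ψ)
  | .ex x φ => .ex x (EForm.trQ c N δ φ)
  | .all x φ => .all x (EForm.trQ c N δ φ)
  | .exrel n name φ => .exrel n name (EForm.trQ c N δ φ)
  | .exfun n name φ => .exfun n name (EForm.trQ c N δ φ)
  | φ => φ

lemma EForm.trQ_sat (Q : Quant.{u} k) (hQ : Q.Mono) (M : Type u) [L.Structure M]
    (c N : ℕ) (δ : EForm L k)
    (hδ : ∀ (ρ : RAssign M) (Fa : FAssign M) (s : ℕ → M),
      ESat Q M ρ Fa s δ ↔ ρ k N ∈ Q M) :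
    ∀ (φ : EForm L k), φ.vBound ≤ c → φ.rBound ≤ N →
      ∀ (ρ : RAssign M) (Fa : FAssign M) (s : ℕ → M),
      (ESat Q M ρ Fa s (EForm.trQ c N δ φ) ↔ ESat Q M ρ Fa s φ)
  | .rel R ts, _, _, ρ, Fa, s => Iff.rfl
  | .nrel R ts, _, _, ρ, Fa, s => Iff.rfl
  | .eEq t t', _, _, ρ, Fa, s => Iff.rfl
  | .eNe t t', _, _, ρ, Fa, s => Iff.rfl
  | .rvar n name ts, _, _, ρ, Fa, s => Iff.rfl
  | .nrvar n name ts, _, _, ρ, Fa, s => Iff.rfl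
  | .and φ ψ, hc, hN, ρ, Fa, s => by
      simp only [EForm.trQ, ESat]
      exact and_congr
        (EForm.trQ_sat Q hQ M c N δ hδ φ (le_trans (le_max_left _ _) hc)
          (le_trans (le_max_left _ _) hN) ρ Fa s)
        (EForm.trQ_sat Q hQ M c N δ hδ ψ (le_trans (le_max_right _ _) hc)
          (le_trans (le_max_right _ _) hN) ρ Fa s)
  | .or φ ψ, hc, hN, ρ, Fa, s => by
      simp only [EForm.trQ, ESat]
      exact or_congr
        (EForm.trQ_sat Q hQ M c N δ hδ φ (le_trans (le_max_left _ _) hc)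
          (le_trans (le_max_left _ _) hN) ρ Fa s)
        (EForm.trQ_sat Q hQ M c N δ hδ ψ (le_trans (le_max_right _ _) hc)
          (le_trans (le_max_right _ _) hN) ρ Fa s)
  | .ex x φ, hc, hN, ρ, Fa, s => by
      simp only [EForm.trQ, ESat]
      exact exists_congr fun a => EForm.trQ_sat Q hQ M c N δ hδ φ
        (le_trans (le_max_right _ _) hc) hN ρ Fa _
  | .all x φ, hc, hN, ρ, Fa, s => by
      simp only [EForm.trQ, ESat]
      exact forall_congr' fun a => EForm.trQ_sat Q hQ M c N δ hδ φ
        (le_trans (le_max_right _ _) hc) hN ρ Fa _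
  | .exrel n name φ, hc, hN, ρ, Fa, s => by
      simp only [EForm.trQ, ESat]
      exact exists_congr fun R => EForm.trQ_sat Q hQ M c N δ hδ φ hc
        (le_trans (le_max_right _ _) hN) _ Fa s
  | .exfun n name φ, hc, hN, ρ, Fa, s => by
      simp only [EForm.trQ, ESat]
      exact exists_congr fun g => EForm.trQ_sat Q hQ M c N δ hδ φ hc hN ρ _ s
  | .qu xs φ, hc, hN, ρ, Fa, s => by
      have hvφ : φ.vBound ≤ c := le_trans (le_max_right _ _) hc
      have hNφ : φ.rBound ≤ N := hN
      have hxs : ∀ i, xs i < c :=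
        fun i => lt_of_lt_of_le (EForm.qu_var_lt_vBound xs φ i) hc
      have hfree : ∀ p ∈ φ.freeRVars, ¬(p.1 = k ∧ p.2 = N) := by
        intro p hp hcon
        have hlt := φ.rNames_lt_rBound p (φ.freeRVars_subset_rNames hp)
        rw [hcon.2] at hlt
        exact absurd (lt_of_lt_of_le hlt hNφ) (lt_irrefl N)
      have key : ∀ R : Set (Fin k → M),
          ESat Q M (ρ.set k N R) Fa s (allsB c k (.or
            (.nrvar k N fun i => .var (c + i.val))
            (exChain ((List.finRange k).map fun i => (xs i, c + i.val))
              (EForm.trQ c N δ φ)))) ↔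
          ∀ b : Fin k → M, b ∈ R → ESat Q M ρ Fa (updVec s xs b) φ := by
        intro R
        rw [allsB_sat]
        refine forall_congr' fun b => ?_
        have htup : (fun i : Fin k =>
            (ETerm.var (c + i.val) : ETerm L).eval Fa (updSeg s c k b)) = b :=
          funext fun i => updSeg_apply s c k b i
        have hside : ∀ p ∈ (List.finRange k).map fun i => (xs i, c + i.val),
            ∀ q ∈ (List.finRange k).map fun i => (xs i, c + i.val),
            p.2 ≠ q.1 := by
          intro p hp q hq
          obtain ⟨i, -, rfl⟩ := List.mem_map.1 hp
          obtain ⟨j, -, rfl⟩ := List.mem_map.1 hq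
          have := hxs j
          simp only
          omega
        have hchain :
            ESat Q M (ρ.set k N R) Fa (updSeg s c k b)
              (exChain ((List.finRange k).map fun i => (xs i, c + i.val))
                (EForm.trQ c N δ φ)) ↔
            ESat Q M ρ Fa (updVec s xs b) φ := by
          rw [exChain_sat Q M _ Fa _ _ _ hside,
            updsP_eq_foldl xs (fun i => c + i.val) b _ _
              (by
                intro i _ j _
                have := hxs j
                omega)
              (fun i _ => updSeg_apply s c k b i),
            ← updVec_eq_foldl,
            EForm.trQ_sat Q hQ M c N δ hδ φ hvφ hNφ (ρ.set k N R) Fa _]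
          refine esat_congr Q M φ
            (fun p hp => RAssign.set_ne _ _ _ _ _ _ (hfree p hp))
            (fun _ _ => rfl)
            (fun v hv => updVec_congr xs b _ _ v ?_)
          by_cases hvr : v ∈ Set.range xs
          · exact Or.inl hvr
          · exact Or.inr (updSeg_lt s c k b v
              (lt_of_lt_of_le (φ.fv_lt_vBound v hv) hvφ))
        simp only [ESat]
        rw [htup, RAssign.set_same, hchain]
        constructor
        · intro h hb
          exact h.resolve_left (not_not_intro hb)
        · intro h
          rcases Classical.em (b ∈ R) with hb | hb
          · exact Or.inr (h hb)
          · exact Or.inl hb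
      simp only [EForm.trQ, ESat]
      constructor
      · rintro ⟨R, hδR, hA⟩
        rw [hδ _ _ _, RAssign.set_same] at hδR
        exact hQ M R _ hδR fun b hb => (key R).1 hA b hb
      · intro hS
        refine ⟨{a | ESat Q M ρ Fa (updVec s xs a) φ}, ?_, ?_⟩
        · rw [hδ _ _ _, RAssign.set_same]
          exact hS
        · exact (key _).2 fun b hb => hb

end TeamSemantics
namespace TeamSemantics

variable {L : FirstOrder.Language.{0, 0}} {k : ℕ}

lemma EForm.trQ_noQu (c N : ℕ) (δ : EForm L k) (hδ : δ.NoQu) :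
    ∀ φ : EForm L k, (EForm.trQ c N δ φ).NoQu
  | .rel _ _ => trivial
  | .nrel _ _ => trivial
  | .eEq _ _ => trivial
  | .eNe _ _ => trivial
  | .rvar _ _ _ => trivial
  | .nrvar _ _ _ => trivial
  | .and φ ψ => ⟨EForm.trQ_noQu c N δ hδ φ, EForm.trQ_noQu c N δ hδ ψ⟩
  | .or φ ψ => ⟨EForm.trQ_noQu c N δ hδ φ, EForm.trQ_noQu c N δ hδ ψ⟩
  | .ex x φ => EForm.trQ_noQu c N δ hδ φ
  | .all x φ => EForm.trQ_noQu c N δ hδ φ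
  | .qu xs φ =>
      ⟨hδ, allsB_noQu c k _ ⟨trivial, exChain_noQu _ _ (EForm.trQ_noQu c N δ hδ φ)⟩⟩
  | .exrel n name φ => EForm.trQ_noQu c N δ hδ φ
  | .exfun n name φ => EForm.trQ_noQu c N δ hδ φ

lemma EForm.trQ_fv (c N : ℕ) (δ : EForm L k) (hδ : δ.fv = ∅) :
    ∀ φ : EForm L k, (EForm.trQ c N δ φ).fv ⊆ φ.fv
  | .rel _ _ => Set.Subset.rfl
  | .nrel _ _ => Set.Subset.rfl
  | .eEq _ _ => Set.Subset.rfl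
  | .eNe _ _ => Set.Subset.rfl
  | .rvar _ _ _ => Set.Subset.rfl
  | .nrvar _ _ _ => Set.Subset.rfl
  | .and φ ψ => Set.union_subset_union (EForm.trQ_fv c N δ hδ φ)
      (EForm.trQ_fv c N δ hδ ψ)
  | .or φ ψ => Set.union_subset_union (EForm.trQ_fv c N δ hδ φ)
      (EForm.trQ_fv c N δ hδ ψ)
  | .ex x φ => Set.diff_subset_diff_left (EForm.trQ_fv c N δ hδ φ)
  | .all x φ => Set.diff_subset_diff_left (EForm.trQ_fv c N δ hδ φ)
  | .exrel n name φ => EForm.trQ_fv c N δ hδ φ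
  | .exfun n name φ => EForm.trQ_fv c N δ hδ φ
  | .qu xs φ => by
      intro v hv
      simp only [EForm.trQ, EForm.fv] at hv
      rcases hv with hv | hv
      · rw [hδ] at hv
        exact absurd hv (Set.notMem_empty v)
      · obtain ⟨hv, hseg⟩ := allsB_fv c k _ hv
        rcases hv with hv | hv
        · obtain ⟨i, hi⟩ := Set.mem_iUnion.1 hv
          have : v = c + i.val := Set.mem_singleton_iff.1 hi
          exact absurd ⟨by omega, by have := i.isLt; omega⟩ hseg
        · rcases exChain_fv _ _ hv with ⟨hfv, hfst⟩ | hsnd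
          · refine ⟨EForm.trQ_fv c N δ hδ φ hfv, ?_⟩
            rintro ⟨i, rfl⟩
            exact hfst ⟨(xs i, c + i.val),
              List.mem_map.2 ⟨i, List.mem_finRange i, rfl⟩, rfl⟩
          · obtain ⟨q, hq, hqe⟩ := hsnd
            obtain ⟨i, -, rfl⟩ := List.mem_map.1 hq
            exact absurd ⟨by omega, by have := i.isLt; simp only at hqe; omega⟩ hseg

lemma EForm.trQ_freeRVars (c N : ℕ) (δ : EForm L k)
    (hδ : δ.freeRVars ⊆ {(k, N)}) :
    ∀ φ : EForm L k, (EForm.trQ c N δ φ).freeRVars ⊆ φ.freeRVars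
  | .rel _ _ => Set.Subset.rfl
  | .nrel _ _ => Set.Subset.rfl
  | .eEq _ _ => Set.Subset.rfl
  | .eNe _ _ => Set.Subset.rfl
  | .rvar _ _ _ => Set.Subset.rfl
  | .nrvar _ _ _ => Set.Subset.rfl
  | .and φ ψ => Set.union_subset_union (EForm.trQ_freeRVars c N δ hδ φ)
      (EForm.trQ_freeRVars c N δ hδ ψ)
  | .or φ ψ => Set.union_subset_union (EForm.trQ_freeRVars c N δ hδ φ)
      (EForm.trQ_freeRVars c N δ hδ ψ)
  | .ex x φ => EForm.trQ_freeRVars c N δ hδ φ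
  | .all x φ => EForm.trQ_freeRVars c N δ hδ φ
  | .exrel n name φ => Set.diff_subset_diff_left (EForm.trQ_freeRVars c N δ hδ φ)
  | .exfun n name φ => EForm.trQ_freeRVars c N δ hδ φ
  | .qu xs φ => by
      intro p hp
      simp only [EForm.trQ, EForm.freeRVars, allsB_freeRVars, exChain_freeRVars]
        at hp
      obtain ⟨hin, hne⟩ := hp
      rcases hin with hin | hin | hin
      · exact absurd (hδ hin) hne
      · exact absurd hin hne
      · exact EForm.trQ_freeRVars c N δ hδ φ hin

lemma EForm.trQ_freeFVars (c N : ℕ) (δ : EForm L k) (hδ : δ.freeFVars = ∅) :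
    ∀ φ : EForm L k, (EForm.trQ c N δ φ).freeFVars ⊆ φ.freeFVars
  | .rel _ _ => Set.Subset.rfl
  | .nrel _ _ => Set.Subset.rfl
  | .eEq _ _ => Set.Subset.rfl
  | .eNe _ _ => Set.Subset.rfl
  | .rvar _ _ _ => Set.Subset.rfl
  | .nrvar _ _ _ => Set.Subset.rfl
  | .and φ ψ => Set.union_subset_union (EForm.trQ_freeFVars c N δ hδ φ)
      (EForm.trQ_freeFVars c N δ hδ ψ)
  | .or φ ψ => Set.union_subset_union (EForm.trQ_freeFVars c N δ hδ φ)
      (EForm.trQ_freeFVars c N δ hδ ψ)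
  | .ex x φ => EForm.trQ_freeFVars c N δ hδ φ
  | .all x φ => EForm.trQ_freeFVars c N δ hδ φ
  | .exrel n name φ => EForm.trQ_freeFVars c N δ hδ φ
  | .exfun n name φ => Set.diff_subset_diff_left (EForm.trQ_freeFVars c N δ hδ φ)
  | .qu xs φ => by
      intro p hp
      simp only [EForm.trQ, EForm.freeFVars, allsB_freeFVars, exChain_freeFVars,
        hδ] at hp
      rcases hp with hp | hp | hp
      · exact absurd hp (Set.notMem_empty p)
      · obtain ⟨i, hi⟩ := Set.mem_iUnion.1 hp
        exact absurd hi (Set.notMem_empty p)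
      · exact EForm.trQ_freeFVars c N δ hδ φ hp

/-! ### The forward direction -/

lemma esodefinable_imp (Q : Quant.{u} k) (hQ : Q.Mono) (hdef : ESODefinable k Q)
    (L : FirstOrder.Language.{0, 0}) (φ : EForm L k) (hφ : φ.Sentence) :
    ∃ ψ : EForm L k, ψ.NoQu ∧ ψ.Sentence ∧
      ∀ (M : Type u) [L.Structure M], Nonempty M →
        (ETrue Q M φ ↔ ETrue Q M ψ) := by
  obtain ⟨φ₀, hNo₀, hS₀, hchar⟩ := hdef
  set N : ℕ := max φ.rBound φ₀.rBound with hNdef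
  set c : ℕ := φ.vBound with hcdef
  have hN₀ : ∀ p ∈ φ₀.rNames, p.2 < N :=
    fun p hp => lt_of_lt_of_le (φ₀.rNames_lt_rBound p hp) (le_max_right _ _)
  set δ : EForm L k := EForm.embed (φ₀.renameR k N) with hδdef
  have hNoδ : δ.NoQu := EForm.embed_noQu _ (φ₀.renameR_noQu k N hNo₀)
  -- The semantic property of δ
  have hδ : ∀ (M : Type u), Nonempty M → ∀ [L.Structure M],
      ∀ (ρ : RAssign M) (Fa : FAssign M) (s : ℕ → M),
      ESat Q M ρ Fa s δ ↔ ρ k N ∈ Q M := by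
    intro M hM _ ρ Fa s
    letI := FirstOrder.Language.emptyStructure (M := M)
    rw [hδdef, EForm.embed_sat Q M _ (φ₀.renameR_noQu k N hNo₀),
      φ₀.renameR_sat (QEmpty 0) M k N hN₀ ρ Fa s]
    rw [hchar M hM (ρ k N)]
    constructor
    · intro h ρ' Fa' s'
      refine (esat_congr (QEmpty 0) M φ₀ (fun p hp => ?_) (fun p hp => ?_)
        (fun v hv => ?_)).1 h
      · have : p = ((k, 0) : ℕ × ℕ) := hS₀.2.1 hp
        rw [this, RAssign.set_same, RAssign.set_same]
      · rw [hS₀.2.2] at hp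
        exact absurd hp (Set.notMem_empty p)
      · rw [hS₀.1] at hv
        exact absurd hv (Set.notMem_empty v)
    · intro h
      exact h ρ Fa s
  refine ⟨EForm.trQ c N δ φ, EForm.trQ_noQu c N δ hNoδ φ, ?_, ?_⟩
  · have hfvδ : δ.fv = ∅ := by
      rw [hδdef, EForm.embed_fv _ (φ₀.renameR_noQu k N hNo₀),
        φ₀.renameR_fv k N, hS₀.1]
    have hrδ : δ.freeRVars ⊆ {(k, N)} := by
      rw [hδdef, EForm.embed_freeRVars _ (φ₀.renameR_noQu k N hNo₀)]
      refine (φ₀.renameR_freeRVars_subset k N).trans ?_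
      intro p hp
      rcases hp with hp | hp
      · have := hS₀.2.1 hp.1
        exact absurd this hp.2
      · exact hp
    have hfδ : δ.freeFVars = ∅ := by
      rw [hδdef, EForm.embed_freeFVars _ (φ₀.renameR_noQu k N hNo₀),
        φ₀.renameR_freeFVars k N, hS₀.2.2]
    refine ⟨?_, ?_, ?_⟩
    · exact Set.subset_empty_iff.1 (hφ.1 ▸ EForm.trQ_fv c N δ hfvδ φ)
    · exact Set.subset_empty_iff.1 (hφ.2.1 ▸ EForm.trQ_freeRVars c N δ hrδ φ)
    · exact Set.subset_empty_iff.1 (hφ.2.2 ▸ EForm.trQ_freeFVars c N δ hfδ φ)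
  · intro M _ hM
    have hsat := EForm.trQ_sat Q hQ M c N δ (hδ M hM) φ le_rfl (le_max_left _ _)
    exact ⟨fun h ρ Fa s => (hsat ρ Fa s).2 (h ρ Fa s),
      fun h ρ Fa s => (hsat ρ Fa s).1 (h ρ Fa s)⟩

end TeamSemantics
namespace TeamSemantics

variable {k : ℕ}

/-! ### The backward direction -/

/-- The language with a single `k`-ary relation symbol. -/
def LR (k : ℕ) : FirstOrder.Language.{0, 0} :=
  ⟨fun _ => Empty, fun n => PLift (n = k)⟩

/-- The `LR k`-structure on `M` determined by `R ⊆ M^k`. -/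
def structR {M : Type u} (R : Set (Fin k → M)) : (LR k).Structure M where
  funMap := fun f _ => Empty.elim f
  RelMap := fun r x => (fun i => x (Fin.cast r.down.symm i)) ∈ R

/-- The sentence `Q x̄ R(x̄)`. -/
def phiR (k : ℕ) : EForm (LR k) k :=
  .qu (fun i => i.val) (.rel (PLift.up rfl) fun i => .var i.val)

lemma phiR_sentence : (phiR k).Sentence := by
  refine ⟨?_, rfl, ?_⟩
  · apply Set.eq_empty_iff_forall_notMem.2
    rintro v ⟨hin, hout⟩
    obtain ⟨i, hi⟩ := Set.mem_iUnion.1 hin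
    exact hout ⟨i, (Set.mem_singleton_iff.1 hi).symm⟩
  · apply Set.eq_empty_iff_forall_notMem.2
    rintro p hp
    obtain ⟨i, hi⟩ := Set.mem_iUnion.1 hp
    exact hi

lemma phiR_true (Q : Quant.{u} k) (M : Type u) (hM : Nonempty M)
    (R : Set (Fin k → M)) :
    (@ETrue (LR k) k Q M (structR R) (phiR k)) ↔ R ∈ Q M := by
  letI := structR R
  have hset : ∀ (ρ : RAssign M) (Fa : FAssign M) (s : ℕ → M),
      {a : Fin k → M | ESat Q M ρ Fa (updVec s (fun i : Fin k => (i : ℕ)) a)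
        (EForm.rel (L := LR k) (PLift.up rfl) fun i => ETerm.var (i : ℕ))} = R := by
    intro ρ Fa s
    ext a
    simp only [Set.mem_setOf_eq, ESat]
    show ((fun i : Fin k => updVec s (fun j : Fin k => (j : ℕ)) a (i : ℕ)) ∈ R)
      ↔ a ∈ R
    rw [show (fun i : Fin k => updVec s (fun j : Fin k => (j : ℕ)) a (i : ℕ)) = a
      from funext fun i => updVec_apply _ a Fin.val_injective s i]
  constructor
  · intro h
    obtain ⟨m0⟩ := hM
    have h2 : {a : Fin k → M | ESat Q M (fun _ _ => (∅ : Set _))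
        (fun _ _ _ => m0) (updVec (fun _ => m0) (fun i : Fin k => (i : ℕ)) a)
        (EForm.rel (L := LR k) (PLift.up rfl) fun i => ETerm.var (i : ℕ))} ∈ Q M :=
      h (fun _ _ => ∅) (fun _ _ _ => m0) (fun _ => m0)
    exact (congrArg (fun S => S ∈ Q M) (hset _ _ _)).mp h2
  · intro hR ρ Fa s
    show {a : Fin k → M | ESat Q M ρ Fa
        (updVec s (fun i : Fin k => (i : ℕ)) a)
        (EForm.rel (L := LR k) (PLift.up rfl) fun i => ETerm.var (i : ℕ))} ∈ Q M
    exact (congrArg (fun S => S ∈ Q M) (hset ρ Fa s)).mpr hR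

/-- Translate terms over `LR k` to terms over the empty language. -/
def tauT : ETerm (LR k) → ETerm FirstOrder.Language.empty
  | .var x => .var x
  | .func f _ => Empty.elim f
  | .fvar n name ts => .fvar n name fun i => tauT (ts i)

/-- Translate an ESO formula over `LR k` into one over `{R}`, rendering `R` as the
relation variable `(k, 0)` and shifting all other relation-variable names up. -/
def tau : EForm (LR k) k → EForm FirstOrder.Language.empty 0
  | .rel r ts => .rvar k 0 fun i => tauT (ts (Fin.cast r.down.symm i))
  | .nrel r ts => .nrvar k 0 fun i => tauT (ts (Fin.cast r.down.symm i))
  | .eEq t t' => .eEq (tauT t) (tauT t')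
  | .eNe t t' => .eNe (tauT t) (tauT t')
  | .rvar n name ts => .rvar n (name + 1) fun i => tauT (ts i)
  | .nrvar n name ts => .nrvar n (name + 1) fun i => tauT (ts i)
  | .and φ ψ => .and (tau φ) (tau ψ)
  | .or φ ψ => .or (tau φ) (tau ψ)
  | .ex x φ => .ex x (tau φ)
  | .all x φ => .all x (tau φ)
  | .qu _ _ => .eEq (.var 0) (.var 0)
  | .exrel n name φ => .exrel n (name + 1) (tau φ)
  | .exfun n name φ => .exfun n name (tau φ)

lemma tauT_eval {M : Type u} (R : Set (Fin k → M)) (Fa : FAssign M) (s : ℕ → M) :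
    ∀ t : ETerm (LR k),
      @ETerm.eval FirstOrder.Language.empty M FirstOrder.Language.emptyStructure
          Fa s (tauT t)
        = @ETerm.eval (LR k) M (structR R) Fa s t
  | .var x => rfl
  | .func f _ => Empty.elim f
  | .fvar n name ts => by
      show Fa n name _ = Fa n name _
      congr 1
      funext i
      exact tauT_eval R Fa s (ts i)

lemma tau_sat (Q : Quant.{u} k) {M : Type u} (R : Set (Fin k → M)) :
    ∀ (ψ : EForm (LR k) k), ψ.NoQu →
      ∀ (ρ ρh : RAssign M) (Fa : FAssign M) (s : ℕ → M),
      (∀ n m, ρh n (m + 1) = ρ n m) → ρh k 0 = R →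
      (@ESat FirstOrder.Language.empty 0 (QEmpty 0) M
          FirstOrder.Language.emptyStructure ρh Fa s (tau ψ) ↔
        @ESat (LR k) k Q M (structR R) ρ Fa s ψ)
  | .rel r ts, _, ρ, ρh, Fa, s, hsh, h0 => by
      simp only [tau, ESat]
      rw [h0, show (fun i : Fin k =>
          @ETerm.eval FirstOrder.Language.empty M
            FirstOrder.Language.emptyStructure Fa s (tauT (ts (Fin.cast r.down.symm i))))
          = fun i : Fin k => @ETerm.eval (LR k) M (structR R) Fa s
            (ts (Fin.cast r.down.symm i)) from
        funext fun i => tauT_eval R Fa s _]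
      exact Iff.rfl
  | .nrel r ts, _, ρ, ρh, Fa, s, hsh, h0 => by
      simp only [tau, ESat]
      rw [h0, show (fun i : Fin k =>
          @ETerm.eval FirstOrder.Language.empty M
            FirstOrder.Language.emptyStructure Fa s (tauT (ts (Fin.cast r.down.symm i))))
          = fun i : Fin k => @ETerm.eval (LR k) M (structR R) Fa s
            (ts (Fin.cast r.down.symm i)) from
        funext fun i => tauT_eval R Fa s _]
      exact Iff.rfl
  | .eEq t t', _, ρ, ρh, Fa, s, hsh, h0 => by
      simp only [tau, ESat]
      rw [tauT_eval R Fa s t, tauT_eval R Fa s t']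
  | .eNe t t', _, ρ, ρh, Fa, s, hsh, h0 => by
      simp only [tau, ESat]
      rw [tauT_eval R Fa s t, tauT_eval R Fa s t']
  | .rvar n name ts, _, ρ, ρh, Fa, s, hsh, h0 => by
      simp only [tau, ESat]
      rw [hsh n name, show (fun i =>
          @ETerm.eval FirstOrder.Language.empty M
            FirstOrder.Language.emptyStructure Fa s (tauT (ts i)))
          = fun i => @ETerm.eval (LR k) M (structR R) Fa s (ts i) from
        funext fun i => tauT_eval R Fa s _]
  | .nrvar n name ts, _, ρ, ρh, Fa, s, hsh, h0 => by
      simp only [tau, ESat]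
      rw [hsh n name, show (fun i =>
          @ETerm.eval FirstOrder.Language.empty M
            FirstOrder.Language.emptyStructure Fa s (tauT (ts i)))
          = fun i => @ETerm.eval (LR k) M (structR R) Fa s (ts i) from
        funext fun i => tauT_eval R Fa s _]
  | .and φ ψ, h, ρ, ρh, Fa, s, hsh, h0 => by
      simp only [tau, ESat]
      exact and_congr (tau_sat Q R φ h.1 ρ ρh Fa s hsh h0)
        (tau_sat Q R ψ h.2 ρ ρh Fa s hsh h0)
  | .or φ ψ, h, ρ, ρh, Fa, s, hsh, h0 => by
      simp only [tau, ESat]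
      exact or_congr (tau_sat Q R φ h.1 ρ ρh Fa s hsh h0)
        (tau_sat Q R ψ h.2 ρ ρh Fa s hsh h0)
  | .ex x φ, h, ρ, ρh, Fa, s, hsh, h0 => by
      simp only [tau, ESat]
      exact exists_congr fun a => tau_sat Q R φ h ρ ρh Fa _ hsh h0
  | .all x φ, h, ρ, ρh, Fa, s, hsh, h0 => by
      simp only [tau, ESat]
      exact forall_congr' fun a => tau_sat Q R φ h ρ ρh Fa _ hsh h0
  | .qu _ _, h, _, _, _, _, _, _ => h.elim
  | .exrel n name φ, h, ρ, ρh, Fa, s, hsh, h0 => by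
      simp only [tau, ESat]
      refine exists_congr fun R₁ => tau_sat Q R φ h _ _ Fa s ?_ ?_
      · intro n' m'
        by_cases hcnd : n' = n ∧ m' = name
        · obtain ⟨rfl, rfl⟩ := hcnd
          rw [RAssign.set_same, RAssign.set_same]
        · rw [RAssign.set_ne _ _ _ _ _ _ (fun hcc => hcnd ⟨hcc.1, by omega⟩),
            RAssign.set_ne _ _ _ _ _ _ hcnd]
          exact hsh n' m'
      · rw [RAssign.set_ne _ _ _ _ _ _
          (fun hcc => Nat.succ_ne_zero name hcc.2.symm)]
        exact h0
  | .exfun n name φ, h, ρ, ρh, Fa, s, hsh, h0 => by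
      simp only [tau, ESat]
      exact exists_congr fun g => tau_sat Q R φ h ρ ρh _ s hsh h0

lemma tauT_fovars : ∀ t : ETerm (LR k), (tauT t).fovars = t.fovars
  | .var x => rfl
  | .func f _ => Empty.elim f
  | .fvar n name ts => by
      simp only [tauT, ETerm.fovars]
      exact Set.iUnion_congr fun i => tauT_fovars (ts i)

lemma tauT_ffvars : ∀ t : ETerm (LR k), (tauT t).ffvars = t.ffvars
  | .var x => rfl
  | .func f _ => Empty.elim f
  | .fvar n name ts => by
      simp only [tauT, ETerm.ffvars]
      rw [Set.iUnion_congr fun i => tauT_ffvars (ts i)]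

lemma tau_noQu : ∀ ψ : EForm (LR k) k, (tau ψ).NoQu
  | .rel _ _ => trivial
  | .nrel _ _ => trivial
  | .eEq _ _ => trivial
  | .eNe _ _ => trivial
  | .rvar _ _ _ => trivial
  | .nrvar _ _ _ => trivial
  | .and φ ψ => ⟨tau_noQu φ, tau_noQu ψ⟩
  | .or φ ψ => ⟨tau_noQu φ, tau_noQu ψ⟩
  | .ex _ φ => tau_noQu φ
  | .all _ φ => tau_noQu φ
  | .qu _ _ => trivial
  | .exrel _ _ φ => tau_noQu φ
  | .exfun _ _ φ => tau_noQu φ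

lemma tau_fv : ∀ ψ : EForm (LR k) k, ψ.NoQu → (tau ψ).fv ⊆ ψ.fv
  | .rel r ts, _ => by
      intro v hv
      obtain ⟨i, hi⟩ := Set.mem_iUnion.1 hv
      rw [tauT_fovars] at hi
      exact Set.mem_iUnion.2 ⟨Fin.cast r.down.symm i, hi⟩
  | .nrel r ts, _ => by
      intro v hv
      obtain ⟨i, hi⟩ := Set.mem_iUnion.1 hv
      rw [tauT_fovars] at hi
      exact Set.mem_iUnion.2 ⟨Fin.cast r.down.symm i, hi⟩
  | .eEq t t', _ => by
      simp only [tau, EForm.fv, tauT_fovars]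
      exact Set.Subset.rfl
  | .eNe t t', _ => by
      simp only [tau, EForm.fv, tauT_fovars]
      exact Set.Subset.rfl
  | .rvar n name ts, _ => by
      intro v hv
      obtain ⟨i, hi⟩ := Set.mem_iUnion.1 hv
      rw [tauT_fovars] at hi
      exact Set.mem_iUnion.2 ⟨i, hi⟩
  | .nrvar n name ts, _ => by
      intro v hv
      obtain ⟨i, hi⟩ := Set.mem_iUnion.1 hv
      rw [tauT_fovars] at hi
      exact Set.mem_iUnion.2 ⟨i, hi⟩
  | .and φ ψ, h => Set.union_subset_union (tau_fv φ h.1) (tau_fv ψ h.2)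
  | .or φ ψ, h => Set.union_subset_union (tau_fv φ h.1) (tau_fv ψ h.2)
  | .ex x φ, h => Set.diff_subset_diff_left (tau_fv φ h)
  | .all x φ, h => Set.diff_subset_diff_left (tau_fv φ h)
  | .qu _ _, h => h.elim
  | .exrel n name φ, h => tau_fv φ h
  | .exfun n name φ, h => tau_fv φ h

lemma tau_freeRVars : ∀ ψ : EForm (LR k) k, ψ.NoQu →
    (tau ψ).freeRVars ⊆
      insert ((k, 0) : ℕ × ℕ) {p | ∃ q ∈ ψ.freeRVars, p = (q.1, q.2 + 1)}
  | .rel r ts, _ => by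
      intro p hp
      exact Or.inl (Set.mem_singleton_iff.1 hp)
  | .nrel r ts, _ => by
      intro p hp
      exact Or.inl (Set.mem_singleton_iff.1 hp)
  | .eEq t t', _ => by simp [tau, EForm.freeRVars]
  | .eNe t t', _ => by simp [tau, EForm.freeRVars]
  | .rvar n name ts, _ => by
      intro p hp
      exact Or.inr ⟨(n, name), rfl, Set.mem_singleton_iff.1 hp⟩
  | .nrvar n name ts, _ => by
      intro p hp
      exact Or.inr ⟨(n, name), rfl, Set.mem_singleton_iff.1 hp⟩
  | .and φ ψ, h => by
      intro p hp
      rcases hp with hp | hp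
      · rcases tau_freeRVars φ h.1 hp with hh | ⟨q, hq, he⟩
        · exact Or.inl hh
        · exact Or.inr ⟨q, Set.mem_union_left _ hq, he⟩
      · rcases tau_freeRVars ψ h.2 hp with hh | ⟨q, hq, he⟩
        · exact Or.inl hh
        · exact Or.inr ⟨q, Set.mem_union_right _ hq, he⟩
  | .or φ ψ, h => by
      intro p hp
      rcases hp with hp | hp
      · rcases tau_freeRVars φ h.1 hp with hh | ⟨q, hq, he⟩
        · exact Or.inl hh
        · exact Or.inr ⟨q, Set.mem_union_left _ hq, he⟩
      · rcases tau_freeRVars ψ h.2 hp with hh | ⟨q, hq, he⟩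
        · exact Or.inl hh
        · exact Or.inr ⟨q, Set.mem_union_right _ hq, he⟩
  | .ex x φ, h => tau_freeRVars φ h
  | .all x φ, h => tau_freeRVars φ h
  | .qu _ _, h => h.elim
  | .exrel n name φ, h => by
      intro p hp
      obtain ⟨hin, hne⟩ := hp
      rcases tau_freeRVars φ h hin with hh | ⟨q, hq, he⟩
      · exact Or.inl hh
      · refine Or.inr ⟨q, ⟨hq, ?_⟩, he⟩
        intro hqe
        apply hne
        rw [he, Set.mem_singleton_iff.1 hqe]
        rfl
  | .exfun n name φ, h => tau_freeRVars φ h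

lemma tau_freeFVars : ∀ ψ : EForm (LR k) k, ψ.NoQu →
    (tau ψ).freeFVars ⊆ ψ.freeFVars
  | .rel r ts, _ => by
      intro p hp
      obtain ⟨i, hi⟩ := Set.mem_iUnion.1 hp
      rw [tauT_ffvars] at hi
      exact Set.mem_iUnion.2 ⟨Fin.cast r.down.symm i, hi⟩
  | .nrel r ts, _ => by
      intro p hp
      obtain ⟨i, hi⟩ := Set.mem_iUnion.1 hp
      rw [tauT_ffvars] at hi
      exact Set.mem_iUnion.2 ⟨Fin.cast r.down.symm i, hi⟩
  | .eEq t t', _ => by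
      simp only [tau, EForm.freeFVars, tauT_ffvars]
      exact Set.Subset.rfl
  | .eNe t t', _ => by
      simp only [tau, EForm.freeFVars, tauT_ffvars]
      exact Set.Subset.rfl
  | .rvar n name ts, _ => by
      intro p hp
      obtain ⟨i, hi⟩ := Set.mem_iUnion.1 hp
      rw [tauT_ffvars] at hi
      exact Set.mem_iUnion.2 ⟨i, hi⟩
  | .nrvar n name ts, _ => by
      intro p hp
      obtain ⟨i, hi⟩ := Set.mem_iUnion.1 hp
      rw [tauT_ffvars] at hi
      exact Set.mem_iUnion.2 ⟨i, hi⟩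
  | .and φ ψ, h => Set.union_subset_union (tau_freeFVars φ h.1) (tau_freeFVars ψ h.2)
  | .or φ ψ, h => Set.union_subset_union (tau_freeFVars φ h.1) (tau_freeFVars ψ h.2)
  | .ex x φ, h => tau_freeFVars φ h
  | .all x φ, h => tau_freeFVars φ h
  | .qu _ _, h => h.elim
  | .exrel n name φ, h => tau_freeFVars φ h
  | .exfun n name φ, h => Set.diff_subset_diff_left (tau_freeFVars φ h)

lemma esodefinable_of (Q : Quant.{u} k)
    (hright : ∀ (L : FirstOrder.Language.{0, 0}) (φ : EForm L k), φ.Sentence →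
      ∃ ψ : EForm L k, ψ.NoQu ∧ ψ.Sentence ∧
        ∀ (M : Type u) [L.Structure M], Nonempty M →
          (ETrue Q M φ ↔ ETrue Q M ψ)) :
    ESODefinable k Q := by
  obtain ⟨ψ, hNo, hSent, hequiv⟩ := hright (LR k) (phiR k) phiR_sentence
  refine ⟨tau ψ, tau_noQu ψ, ⟨?_, ?_, ?_⟩, ?_⟩
  · exact Set.subset_empty_iff.1 (hSent.1 ▸ tau_fv ψ hNo)
  · refine (tau_freeRVars ψ hNo).trans ?_
    intro p hp
    rcases hp with hp | ⟨q, hq, he⟩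
    · exact hp
    · rw [hSent.2.1] at hq
      exact absurd hq (Set.notMem_empty q)
  · exact Set.subset_empty_iff.1 (hSent.2.2 ▸ tau_freeFVars ψ hNo)
  · intro M hM R
    letI := FirstOrder.Language.emptyStructure (M := M)
    letI : (LR k).Structure M := structR R
    constructor
    · intro hR ρ' Fa s
      have hT : ETrue Q M ψ := (hequiv M hM).1 ((phiR_true Q M hM R).2 hR)
      exact (tau_sat Q R ψ hNo (fun n m => (ρ'.set k 0 R) n (m + 1))
        (ρ'.set k 0 R) Fa s (fun _ _ => rfl) (RAssign.set_same _ _ _ _)).2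
        (hT _ Fa s)
    · intro hW
      apply (phiR_true Q M hM R).1
      apply (hequiv M hM).2
      intro ρ Fa s
      exact (tau_sat Q R ψ hNo ρ (RAssign.set (fun n m => ρ n (m - 1)) k 0 R)
        Fa s
        (fun n m => by
          exact (RAssign.set_ne _ _ _ _ _ _ (fun hcc => Nat.add_one_ne_zero m hcc.2)).trans rfl)
        (RAssign.set_same _ _ _ _)).1
        (hW (fun n m => ρ n (m - 1)) Fa s)

end TeamSemantics


open TeamSemantics

/-- For a monotone generalized quantifier `Q` of type ⟨k⟩: `Q` is
definable in ESO iff `ESO(Q) ≡ ESO`, i.e. iff every sentence of ESO(Q) (over any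
vocabulary) is logically equivalent to an ESO-sentence. -/
theorem eso_definable_iff_esoq_equiv_eso
    (k : ℕ) (Q : Quant.{u} k) (hQ : Q.Mono) :
    ESODefinable k Q ↔
      ∀ (L : FirstOrder.Language.{0, 0}) (φ : EForm L k), φ.Sentence →
        ∃ ψ : EForm L k, ψ.NoQu ∧ ψ.Sentence ∧
          ∀ (M : Type u) [L.Structure M], Nonempty M →
            (ETrue Q M φ ↔ ETrue Q M ψ) :=
  ⟨fun hdef L φ hφ => TeamSemantics.esodefinable_imp Q hQ hdef L φ hφ,
    fun h => TeamSemantics.esodefinable_of Q h⟩
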